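/- arXiv:2504.10346 — 6 statements merged into one kernel-verified Lean document; each statement's English description precedes it below -/
import Mathlib

section
/- Let X be a complex Banach space, let E, A be bounded linear operators on X such that E is not bijective and the pencil (E,A) is regular, let μ ∈ ρ(E,A), and set T_μ = (μE − A)^{-1}E. Then zero is an isolated point of the spectrum σ(T_μ) if and only if σ(E,A) is a bounded subset of ℂ. -/
/-- Inverse of a bounded operator on a Banach space, `0` if not bijective. -/
noncomputable def pinv {X : Type*} [NormedAddCommGroup X] [NormedSpace ℂ X] [CompleteSpace X]
    (B : X →L[ℂ] X) : X →L[ℂ] X :=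
  letI := Classical.dec (Function.Bijective B)
  if h : Function.Bijective B then
    ((ContinuousLinearEquiv.ofBijective B (LinearMap.ker_eq_bot.mpr h.1)
      (LinearMap.range_eq_top.mpr h.2)).symm : X ≃L[ℂ] X)
  else 0

section Aux
variable {X : Type*} [NormedAddCommGroup X] [NormedSpace ℂ X] [CompleteSpace X]

lemma comp_pinv_apply (B : X →L[ℂ] X) (h : Function.Bijective B) (x : X) :
    B (pinv B x) = x := by simp [pinv, h]

lemma pinv_comp_apply (B : X →L[ℂ] X) (h : Function.Bijective B) (x : X) :
    pinv B (B x) = x := by simp [pinv, h]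

lemma isUnit_iff_bij (B : X →L[ℂ] X) : IsUnit B ↔ Function.Bijective B := by
  constructor
  · rintro ⟨u, rfl⟩
    refine Function.bijective_iff_has_inverse.mpr
      ⟨⇑(↑u⁻¹ : X →L[ℂ] X), fun x => ?_, fun x => ?_⟩
    · rw [← ContinuousLinearMap.mul_apply, u.inv_mul, ContinuousLinearMap.one_apply]
    · rw [← ContinuousLinearMap.mul_apply, u.mul_inv, ContinuousLinearMap.one_apply]
  · intro h
    exact ⟨⟨B, pinv B,
      by ext x; simp [ContinuousLinearMap.mul_apply, comp_pinv_apply B h],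
      by ext x; simp [ContinuousLinearMap.mul_apply, pinv_comp_apply B h]⟩, rfl⟩

lemma mem_spec_iff (E A : X →L[ℂ] X) (μ : ℂ) (hμ : Function.Bijective (μ • E - A))
    {lam : ℂ} (hlam : lam ≠ 0) :
    lam ∈ spectrum ℂ (pinv (μ • E - A) ∘L E) ↔
      ¬ Function.Bijective ((μ - lam⁻¹) • E - A) := by
  set B := μ • E - A with hB
  rw [spectrum.mem_iff, Algebra.algebraMap_eq_smul_one, isUnit_iff_bij, not_iff_not]
  have key : B ∘L (lam • (1 : X →L[ℂ] X) - pinv B ∘L E)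
      = lam • ((μ - lam⁻¹) • E - A) := by
    ext x
    simp only [ContinuousLinearMap.comp_apply, ContinuousLinearMap.sub_apply,
      ContinuousLinearMap.smul_apply, ContinuousLinearMap.one_apply, map_sub, map_smul,
      comp_pinv_apply B hμ, hB]
    have hc := comp_pinv_apply (μ • E - A) hμ (E x)
    simp only [ContinuousLinearMap.sub_apply, ContinuousLinearMap.smul_apply] at hc
    rw [hc]
    match_scalars <;> (try field_simp) <;> try ring
  have hlamsmul : Function.Bijective (fun x : X => lam • x) := by
    refine ⟨fun a b hab => ?_, fun x => ⟨lam⁻¹ • x, by simp [smul_smul, hlam]⟩⟩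
    have := congrArg (fun y => lam⁻¹ • y) hab
    simpa [smul_smul, inv_mul_cancel₀ hlam] using this
  have coeeq : ⇑(lam • ((μ - lam⁻¹) • E - A))
      = (fun x : X => lam • x) ∘ ⇑((μ - lam⁻¹) • E - A) := by ext x; simp
  constructor
  · intro h
    have h2 : Function.Bijective (⇑B ∘ ⇑(lam • (1 : X →L[ℂ] X) - pinv B ∘L E)) := hμ.comp h
    rw [← ContinuousLinearMap.coe_comp', key, coeeq] at h2
    exact (Function.Bijective.of_comp_iff' hlamsmul _).mp h2
  · intro h
    have h2 : Function.Bijective (lam • ((μ - lam⁻¹) • E - A)) := by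
      rw [coeeq]; exact hlamsmul.comp h
    rw [← key, ContinuousLinearMap.coe_comp'] at h2
    exact (Function.Bijective.of_comp_iff' hμ _).mp h2

lemma zero_mem_spec (E A : X →L[ℂ] X) (hE : ¬ Function.Bijective E)
    (μ : ℂ) (hμ : Function.Bijective (μ • E - A)) :
    (0 : ℂ) ∈ spectrum ℂ (pinv (μ • E - A) ∘L E) := by
  rw [spectrum.mem_iff, map_zero, zero_sub, IsUnit.neg_iff, isUnit_iff_bij]
  intro hT
  apply hE
  have : ⇑E = ⇑(μ • E - A) ∘ ⇑(pinv (μ • E - A) ∘L E) := by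
    ext x
    exact (comp_pinv_apply (μ • E - A) hμ (E x)).symm
  rw [this]
  exact hμ.comp hT
end Aux

/-- If `E` is not bijective, the pencil `(E,A)` is regular, and `μ ∈ ρ(E,A)`,
then zero is an isolated point of the spectrum of `T_μ = (μE - A)⁻¹E` if and only if
`σ(E,A) = {s : sE - A not bijective}` is bounded. -/
theorem stmt2 {X : Type*} [NormedAddCommGroup X] [NormedSpace ℂ X] [CompleteSpace X]
    (E A : X →L[ℂ] X) (hE : ¬ Function.Bijective E)
    (μ : ℂ) (hμ : Function.Bijective (μ • E - A)) :
    ((0 : ℂ) ∈ spectrum ℂ (pinv (μ • E - A) ∘L E) ∧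
      ∃ ε > 0, ∀ lam ∈ spectrum ℂ (pinv (μ • E - A) ∘L E), ‖lam‖ < ε → lam = 0) ↔
    Bornology.IsBounded {s : ℂ | ¬ Function.Bijective (s • E - A)} := by
  constructor
  · rintro ⟨-, ε, hε, hiso⟩
    rw [isBounded_iff_forall_norm_le]
    refine ⟨‖μ‖ + ε⁻¹, fun s hs => ?_⟩
    have hsμ : s ≠ μ := by
      rintro rfl
      exact hs hμ
    set lam : ℂ := (μ - s)⁻¹ with hlamdef
    have hμs : μ - s ≠ 0 := sub_ne_zero.mpr (Ne.symm hsμ)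
    have hlam0 : lam ≠ 0 := inv_ne_zero hμs
    have hmem : lam ∈ spectrum ℂ (pinv (μ • E - A) ∘L E) := by
      rw [mem_spec_iff E A μ hμ hlam0]
      have : μ - lam⁻¹ = s := by
        rw [hlamdef, inv_inv]; ring
      rw [this]
      exact hs
    have hge : ε ≤ ‖lam‖ := by
      by_contra hlt
      exact hlam0 (hiso lam hmem (lt_of_not_ge hlt))
    have h1 : ‖μ - s‖ ≤ ε⁻¹ := by
      rw [hlamdef, norm_inv] at hge
      calc ‖μ - s‖ = (‖μ - s‖⁻¹)⁻¹ := by rw [inv_inv]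
        _ ≤ ε⁻¹ := by
            apply inv_anti₀ hε hge
    calc ‖s‖ = ‖μ - (μ - s)‖ := by ring_nf
      _ ≤ ‖μ‖ + ‖μ - s‖ := norm_sub_le _ _
      _ ≤ ‖μ‖ + ε⁻¹ := by linarith
  · intro hb
    rw [isBounded_iff_forall_norm_le] at hb
    obtain ⟨C, hC⟩ := hb
    set R : ℝ := max C 0 + ‖μ‖ + 1 with hRdef
    have hRpos : 0 < R := by positivity
    refine ⟨zero_mem_spec E A hE μ hμ, R⁻¹, inv_pos.mpr hRpos, fun lam hmem hlt => ?_⟩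
    by_contra hlam0
    rw [mem_spec_iff E A μ hμ hlam0] at hmem
    have hs : ‖μ - lam⁻¹‖ ≤ max C 0 :=
      le_max_of_le_left (hC _ hmem)
    have hlampos : 0 < ‖lam‖ := norm_pos_iff.mpr hlam0
    have h1 : R < ‖lam⁻¹‖ := by
      rw [norm_inv]
      nlinarith [mul_inv_cancel₀ hlampos.ne', mul_inv_cancel₀ hRpos.ne',
        mul_lt_mul_of_pos_left hlt hRpos]
    have h2 : ‖lam⁻¹‖ ≤ ‖μ‖ + ‖μ - lam⁻¹‖ := by
      calc ‖lam⁻¹‖ = ‖μ - (μ - lam⁻¹)‖ := by ring_nf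
        _ ≤ ‖μ‖ + ‖μ - lam⁻¹‖ := norm_sub_le _ _
    rw [hRdef] at h1
    linarith
end

section
/- Let X be a complex Banach space, let E, A be bounded linear operators on X, let c ∈ ℂ and 0 < r₁ < r₂, and assume that every z ∈ ℂ with r₁ ≤ |z − c| ≤ r₂ belongs to ρ(E,A). Define P₁ = (2πi)^{-1} ∮_{|z−c|=r₁} (zE − A)^{-1}E dz and P₂ = (2πi)^{-1} ∮_{|z−c|=r₂} (zE − A)^{-1}E dz (positively oriented circle contour integrals). Then P₁ = P₂ and P₁² = P₁, i.e., this operator is a bounded projection on X. -/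
open MeasureTheory Set Metric Complex intervalIntegral

section helpers

variable {X : Type*} [NormedAddCommGroup X] [NormedSpace ℂ X] [CompleteSpace X]

lemma isUnit_of_bijective {B : X →L[ℂ] X} (h : Function.Bijective B) : IsUnit B := by
  let e := ContinuousLinearEquiv.ofBijective B (LinearMap.ker_eq_bot.mpr h.1)
      (LinearMap.range_eq_top.mpr h.2)
  refine ⟨⟨B, (e.symm : X →L[ℂ] X), ?_, ?_⟩, rfl⟩
  · ext x; exact e.apply_symm_apply x
  · ext x; exact e.symm_apply_apply x

lemma pinv_eq (B : X →L[ℂ] X) : pinv B = Ring.inverse B := by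
  by_cases h : Function.Bijective B
  · have hu := isUnit_of_bijective h
    rw [pinv, dif_pos h]
    set e := ContinuousLinearEquiv.ofBijective B (LinearMap.ker_eq_bot.mpr h.1)
      (LinearMap.range_eq_top.mpr h.2) with he
    have hBe : B * (e.symm : X →L[ℂ] X) = 1 := by ext x; exact e.apply_symm_apply x
    calc (e.symm : X →L[ℂ] X) = 1 * (e.symm : X →L[ℂ] X) := (one_mul _).symm
      _ = (Ring.inverse B * B) * (e.symm : X →L[ℂ] X) := by rw [Ring.inverse_mul_cancel _ hu]
      _ = Ring.inverse B * (B * (e.symm : X →L[ℂ] X)) := mul_assoc _ _ _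
      _ = Ring.inverse B := by rw [hBe, mul_one]
  · rw [pinv, dif_neg h, Ring.inverse_non_unit]
    intro hu
    apply h
    obtain ⟨u, rfl⟩ := hu
    have h1 : (u : X →L[ℂ] X) * (↑u⁻¹ : X →L[ℂ] X) = 1 := u.mul_inv
    have h2 : (↑u⁻¹ : X →L[ℂ] X) * (u : X →L[ℂ] X) = 1 := u.inv_mul
    refine Function.bijective_iff_has_inverse.2 ⟨(↑u⁻¹ : X →L[ℂ] X), fun x => ?_, fun x => ?_⟩
    · exact DFunLike.congr_fun h2 x
    · exact DFunLike.congr_fun h1 x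

lemma fdiff (E A : X →L[ℂ] X) {z : ℂ} (h : Function.Bijective (z • E - A)) :
    DifferentiableAt ℂ (fun w : ℂ => Ring.inverse (w • E - A) * E) z := by
  have h1 : DifferentiableAt ℂ (fun w : ℂ => w • E - A) z :=
    (differentiableAt_id.smul_const E).sub_const A
  exact (h1.inverse (isUnit_of_bijective h)).mul_const E

lemma res_id (E A : X →L[ℂ] X) {z w : ℂ} (hz : Function.Bijective (z • E - A))
    (hw : Function.Bijective (w • E - A)) (hne : z ≠ w) :
    (Ring.inverse (z • E - A) * E) * (Ring.inverse (w • E - A) * E) =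
      (w - z)⁻¹ • ((Ring.inverse (z • E - A) * E) - (Ring.inverse (w • E - A) * E)) := by
  set Rz := Ring.inverse (z • E - A) with hRz
  set Rw := Ring.inverse (w • E - A) with hRw
  have h1 : Rz * (z • E - A) = 1 := Ring.inverse_mul_cancel _ (isUnit_of_bijective hz)
  have h2 : (w • E - A) * Rw = 1 := Ring.mul_inverse_cancel _ (isUnit_of_bijective hw)
  have key : Rz - Rw = (w - z) • (Rz * E * Rw) := by
    have : Rz - Rw = Rz * ((w • E - A) * Rw) - (Rz * (z • E - A)) * Rw := by
      rw [h1, h2, mul_one, one_mul]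
    rw [this, ← mul_assoc, ← sub_mul, ← mul_sub]
    have h3 : (w • E - A) - (z • E - A) = (w - z) • E := by
      rw [sub_smul]; abel
    rw [h3, mul_smul_comm, smul_mul_assoc]
  have hwz : w - z ≠ 0 := sub_ne_zero.2 (Ne.symm hne)
  have key2 : Rz * E * Rw = (w - z)⁻¹ • (Rz - Rw) := by
    rw [key, inv_smul_smul₀ hwz]
  calc (Rz * E) * (Rw * E) = (Rz * E * Rw) * E := by noncomm_ring
    _ = ((w - z)⁻¹ • (Rz - Rw)) * E := by rw [key2]
    _ = (w - z)⁻¹ • ((Rz * E) - (Rw * E)) := by rw [smul_mul_assoc, sub_mul]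

lemma clm_circleIntegral_comm {F G : Type*} [NormedAddCommGroup F] [NormedSpace ℂ F]
    [NormedAddCommGroup G] [NormedSpace ℂ G] [CompleteSpace F] [CompleteSpace G] (L : F →L[ℂ] G) {f : ℂ → F}
    {c : ℂ} {R : ℝ} (hf : CircleIntegrable f c R) :
    (∮ z in C(c, R), L (f z)) = L (∮ z in C(c, R), f z) := by
  simp only [circleIntegral]
  rw [← L.intervalIntegral_comp_comm hf.out]
  simp only [_root_.map_smul]

lemma circleInt_inv_zero {c w : ℂ} {r : ℝ} (h0 : 0 ≤ r) (hw : r < dist w c) :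
    (∮ z in C(c, r), (w - z)⁻¹) = 0 := by
  refine circleIntegral_eq_zero_of_differentiable_on_off_countable h0 countable_empty ?_ ?_
  · intro z hz
    have hzw : w - z ≠ 0 := by
      intro h
      rw [sub_eq_zero] at h
      subst h
      exact absurd (mem_closedBall.mp hz) (not_le.mpr hw)
    exact (((continuousAt_const.sub continuousAt_id).inv₀ hzw)).continuousWithinAt
  · intro z hz
    have hzw : w - z ≠ 0 := by
      intro h
      rw [sub_eq_zero] at h
      subst h
      exact absurd (ball_subset_closedBall (diff_subset hz) : w ∈ closedBall c r)
        (by simpa using not_le.mpr hw)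
    exact ((differentiableAt_const w).sub differentiableAt_id).inv hzw

lemma interval_swap {B : Type*} [NormedAddCommGroup B] [NormedSpace ℝ B]
    (G : ℝ → ℝ → B) (hG : Continuous (Function.uncurry G)) {a b : ℝ} (hab : a ≤ b) :
    ∫ θ in a..b, ∫ φ in a..b, G θ φ = ∫ φ in a..b, ∫ θ in a..b, G θ φ := by
  have hint : Integrable (Function.uncurry G)
      ((volume.restrict (Ioc a b)).prod (volume.restrict (Ioc a b))) := by
    rw [Measure.prod_restrict]
    exact ((hG.continuousOn.integrableOn_compact (isCompact_Icc.prod isCompact_Icc)).mono_set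
      (Set.prod_mono Set.Ioc_subset_Icc_self Set.Ioc_subset_Icc_self))
  have := MeasureTheory.integral_integral_swap (f := G) hint
  simpa only [intervalIntegral.integral_of_le hab] using this

end helpers

/-- If the closed annulus `r₁ ≤ |z - c| ≤ r₂` is contained in `ρ(E,A)`, then the two
contour integrals `(2πi)⁻¹ ∮_{|z-c|=rⱼ} (zE - A)⁻¹ E dz`, `j = 1,2`, coincide and
define a bounded projection on `X`. -/
theorem stmt3 {X : Type*} [NormedAddCommGroup X] [NormedSpace ℂ X] [CompleteSpace X]
    (E A : X →L[ℂ] X) (c : ℂ) (r₁ r₂ : ℝ) (hr₁ : 0 < r₁) (hr : r₁ < r₂)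
    (hρ : ∀ z : ℂ, r₁ ≤ ‖z - c‖ → ‖z - c‖ ≤ r₂ → Function.Bijective (z • E - A)) :
    (2 * Real.pi * Complex.I)⁻¹ • (∮ z in C(c, r₁), pinv (z • E - A) ∘L E) =
      (2 * Real.pi * Complex.I)⁻¹ • (∮ z in C(c, r₂), pinv (z • E - A) ∘L E) ∧
    ((2 * Real.pi * Complex.I)⁻¹ • (∮ z in C(c, r₁), pinv (z • E - A) ∘L E)) ∘L
      ((2 * Real.pi * Complex.I)⁻¹ • (∮ z in C(c, r₁), pinv (z • E - A) ∘L E)) =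
      (2 * Real.pi * Complex.I)⁻¹ • (∮ z in C(c, r₁), pinv (z • E - A) ∘L E) := by
  set f : ℂ → (X →L[ℂ] X) := fun z => Ring.inverse (z • E - A) * E with hfdef
  have hfg : ∀ z : ℂ, pinv (z • E - A) ∘L E = f z := fun z => by
    rw [pinv_eq]; rfl
  simp only [hfg]
  set s : ℂ := 2 * Real.pi * Complex.I with hs
  have hs0 : s ≠ 0 := by
    simp [hs, Real.pi_ne_zero, Complex.I_ne_zero, Complex.ofReal_ne_zero]
  -- norms of circle points
  have hnrm : ∀ (r : ℝ) (θ : ℝ), 0 < r → ‖circleMap c r θ - c‖ = r := fun r θ h0 => by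
    rw [circleMap_sub_center, norm_circleMap_zero, abs_of_pos h0]
  have hdiff : ∀ z : ℂ, r₁ ≤ ‖z - c‖ → ‖z - c‖ ≤ r₂ → DifferentiableAt ℂ f z :=
    fun z h1 h2 => fdiff E A (hρ z h1 h2)
  have hconOn : ∀ r : ℝ, r₁ ≤ r → r ≤ r₂ → ContinuousOn f (sphere c r) := by
    intro r h1 h2 z hz
    rw [mem_sphere_iff_norm] at hz
    exact ((hdiff z (hz ▸ h1) (hz ▸ h2)).continuousAt).continuousWithinAt
  have hcontc : ∀ r : ℝ, r₁ ≤ r → r ≤ r₂ → Continuous fun θ : ℝ => f (circleMap c r θ) := by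
    intro r h1 h2
    refine continuous_iff_continuousAt.2 fun θ => ?_
    have hn := hnrm r θ (lt_of_lt_of_le hr₁ h1)
    exact ((hdiff _ (by rw [hn]; exact h1) (by rw [hn]; exact h2)).continuousAt).comp
      (continuous_circleMap c r).continuousAt
  have hI1 : CircleIntegrable f c r₁ := (hconOn r₁ le_rfl hr.le).circleIntegrable hr₁.le
  have hI2 : CircleIntegrable f c r₂ :=
    (hconOn r₂ hr.le le_rfl).circleIntegrable (hr₁.trans hr).le
  set I₁ : X →L[ℂ] X := ∮ z in C(c, r₁), f z with hI₁def
  set I₂ : X →L[ℂ] X := ∮ z in C(c, r₂), f z with hI₂def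
  -- Part A : the two integrals agree
  have hA : I₂ = I₁ := by
    refine circleIntegral_eq_of_differentiable_on_annulus_off_countable hr₁ hr.le
      countable_empty ?_ ?_
    · intro z hz
      obtain ⟨h2, h1⟩ := hz
      rw [mem_closedBall, dist_eq_norm] at h2
      rw [mem_ball, dist_eq_norm, not_lt] at h1
      exact ((hdiff z h1 h2).continuousAt).continuousWithinAt
    · intro z hz
      obtain ⟨⟨h2, h1⟩, -⟩ := hz
      rw [mem_ball, dist_eq_norm] at h2
      rw [mem_closedBall, dist_eq_norm, not_le] at h1
      exact hdiff z h1.le h2.le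
  -- the function appearing in the inner integral
  set hh : ℂ → (X →L[ℂ] X) := fun z => ∮ w in C(c, r₂), (w - z)⁻¹ • f w with hhdef
  -- Step 1 : I₁ * I₂ = ∮_{z ∈ C(c,r₁)} f z * I₂
  have step1 : I₁ * I₂ = ∮ z in C(c, r₁), f z * I₂ := by
    have h := clm_circleIntegral_comm ((ContinuousLinearMap.mul ℂ (X →L[ℂ] X)).flip I₂) hI1
    simpa only [ContinuousLinearMap.flip_apply, ContinuousLinearMap.mul_apply'] using h.symm
  -- Step 2 : pointwise identity on the inner circle
  have step2 : ∀ z : ℂ, ‖z - c‖ = r₁ → f z * I₂ = s • f z - hh z := by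
    intro z hz
    have hzb : Function.Bijective (z • E - A) := hρ z hz.ge (hz ▸ hr.le)
    have e1 : f z * I₂ = ∮ w in C(c, r₂), f z * f w := by
      have h := clm_circleIntegral_comm (ContinuousLinearMap.mul ℂ (X →L[ℂ] X) (f z)) hI2
      simpa only [ContinuousLinearMap.mul_apply'] using h.symm
    have e2 : (∮ w in C(c, r₂), f z * f w) =
        ∮ w in C(c, r₂), ((w - z)⁻¹ • f z - (w - z)⁻¹ • f w) := by
      refine circleIntegral.integral_congr (hr₁.trans hr).le fun w hw => ?_
      rw [mem_sphere_iff_norm] at hw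
      have hwb : Function.Bijective (w • E - A) := hρ w (hw ▸ hr.le) hw.le
      have hne : z ≠ w := fun h => by rw [h, hw] at hz; exact hr.ne hz.symm
      rw [hfdef]
      dsimp only
      rw [res_id E A hzb hwb hne, smul_sub]
    have hzw2 : ∀ w ∈ sphere c r₂, w - z ≠ 0 := by
      intro w hw h
      rw [mem_sphere_iff_norm] at hw
      rw [sub_eq_zero] at h
      subst h
      rw [hz] at hw
      exact hr.ne hw
    have hg1 : CircleIntegrable (fun w => (w - z)⁻¹ • f z) c r₂ := by
      refine ContinuousOn.circleIntegrable (hr₁.trans hr).le ?_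
      exact (((continuousOn_id.sub continuousOn_const).inv₀ hzw2).smul continuousOn_const)
    have hg2 : CircleIntegrable (fun w => (w - z)⁻¹ • f w) c r₂ := by
      refine ContinuousOn.circleIntegrable (hr₁.trans hr).le ?_
      exact (((continuousOn_id.sub continuousOn_const).inv₀ hzw2).smul (hconOn r₂ hr.le le_rfl))
    rw [e1, e2, circleIntegral.integral_sub hg1 hg2]
    congr 1
    rw [circleIntegral.integral_smul_const,
      circleIntegral.integral_sub_inv_of_mem_ball (by
        rw [mem_ball, dist_eq_norm, hz]; exact hr)]
  -- Step 3 : I₁ * I₂ = s • I₁ - ∮ hh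
  have step3 : I₁ * I₂ = s • I₁ - ∮ z in C(c, r₁), hh z := by
    rw [step1]
    have e3 : (∮ z in C(c, r₁), f z * I₂) = ∮ z in C(c, r₁), (s • f z - hh z) := by
      refine circleIntegral.integral_congr hr₁.le fun z hz => ?_
      rw [mem_sphere_iff_norm] at hz
      exact step2 z hz
    -- continuity of hh on the inner circle
    have hfcirc2 : Continuous fun φ : ℝ => f (circleMap c r₂ φ) := hcontc r₂ hr.le le_rfl
    have hKcont : Continuous (Function.uncurry fun (z : ball c r₂) (φ : ℝ) =>
        deriv (circleMap c r₂) φ • ((circleMap c r₂ φ - (z : ℂ))⁻¹ • f (circleMap c r₂ φ))) := by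
      apply Continuous.fun_smul
      · simp only [deriv_circleMap]
        exact ((continuous_circleMap 0 r₂).comp continuous_snd).mul continuous_const
      · apply Continuous.fun_smul
        · apply Continuous.fun_inv₀
          · exact ((continuous_circleMap c r₂).comp continuous_snd).sub
              (continuous_subtype_val.comp continuous_fst)
          · rintro ⟨⟨z, hzb⟩, φ⟩
            dsimp only
            refine sub_ne_zero.2 fun h => ?_
            rw [mem_ball, dist_eq_norm] at hzb
            rw [← h, hnrm r₂ φ (hr₁.trans hr)] at hzb
            exact lt_irrefl _ hzb
        · exact hfcirc2.comp continuous_snd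
    have hhball : ContinuousOn hh (ball c r₂) := by
      rw [continuousOn_iff_continuous_restrict]
      exact intervalIntegral.continuous_parametric_intervalIntegral_of_continuous' hKcont 0
        (2 * Real.pi)
    have hIhh : CircleIntegrable hh c r₁ := by
      refine (hhball.mono fun z hz => ?_).circleIntegrable hr₁.le
      rw [mem_sphere_iff_norm] at hz
      rw [mem_ball, dist_eq_norm, hz]
      exact hr
    have hIsf : CircleIntegrable (fun z => s • f z) c r₁ :=
      (continuousOn_const.fun_smul (hconOn r₁ le_rfl hr.le)).circleIntegrable hr₁.le
    rw [e3, circleIntegral.integral_sub hIsf hIhh, circleIntegral.integral_smul]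
  -- Step 4 : the remaining double integral vanishes (Fubini)
  have hT : (∮ z in C(c, r₁), hh z) = 0 := by
    set G : ℝ → ℝ → (X →L[ℂ] X) := fun θ φ =>
      deriv (circleMap c r₁) θ • (deriv (circleMap c r₂) φ •
        ((circleMap c r₂ φ - circleMap c r₁ θ)⁻¹ • f (circleMap c r₂ φ))) with hGdef
    have hGcont : Continuous (Function.uncurry G) := by
      apply Continuous.fun_smul
      · simp only [deriv_circleMap]
        exact ((continuous_circleMap 0 r₁).comp continuous_fst).mul continuous_const
      apply Continuous.fun_smul
      · simp only [deriv_circleMap]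
        exact ((continuous_circleMap 0 r₂).comp continuous_snd).mul continuous_const
      apply Continuous.fun_smul
      · apply Continuous.fun_inv₀
        · exact ((continuous_circleMap c r₂).comp continuous_snd).sub
            ((continuous_circleMap c r₁).comp continuous_fst)
        · rintro ⟨θ, φ⟩
          refine sub_ne_zero.2 fun h => ?_
          have h1 := hnrm r₂ φ (hr₁.trans hr)
          have h2 := hnrm r₁ θ hr₁
          rw [h] at h1
          rw [h1] at h2
          exact hr.ne h2.symm
      · exact (hcontc r₂ hr.le le_rfl).comp continuous_snd
    have h1 : (∮ z in C(c, r₁), hh z) =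
        ∫ θ in (0:ℝ)..(2 * Real.pi), ∫ φ in (0:ℝ)..(2 * Real.pi), G θ φ := by
      rw [circleIntegral]
      refine intervalIntegral.integral_congr fun θ _ => ?_
      rw [hhdef]
      dsimp only
      rw [circleIntegral, ← intervalIntegral.integral_smul]
    have h3 : ∀ φ : ℝ, (∫ θ in (0:ℝ)..(2 * Real.pi), G θ φ) = 0 := by
      intro φ
      have hG' : (fun θ => G θ φ) = fun θ =>
          (deriv (circleMap c r₁) θ * (circleMap c r₂ φ - circleMap c r₁ θ)⁻¹) •
            (deriv (circleMap c r₂) φ • f (circleMap c r₂ φ)) := by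
        funext θ
        simp only [hGdef, smul_smul]
        congr 1
        ring
      rw [hG', intervalIntegral.integral_smul_const]
      have h4 : (∫ θ in (0:ℝ)..(2 * Real.pi),
          deriv (circleMap c r₁) θ * (circleMap c r₂ φ - circleMap c r₁ θ)⁻¹) =
          ∮ z in C(c, r₁), (circleMap c r₂ φ - z)⁻¹ := by
        simp only [circleIntegral, smul_eq_mul]
      rw [h4, circleInt_inv_zero hr₁.le (by rw [dist_eq_norm, hnrm r₂ φ (hr₁.trans hr)]; exact hr),
        zero_smul]
    rw [h1, interval_swap G hGcont Real.two_pi_pos.le]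
    simp only [h3, intervalIntegral.integral_zero]
  have hmain : I₁ * I₂ = s • I₁ := by rw [step3, hT, sub_zero]
  refine ⟨by rw [hA], ?_⟩
  calc (s⁻¹ • I₁) ∘L (s⁻¹ • I₁) = (s⁻¹ • I₁) * (s⁻¹ • I₁) := rfl
    _ = (s⁻¹ * s⁻¹) • (I₁ * I₂) := by rw [smul_mul_smul_comm, hA]
    _ = (s⁻¹ * s⁻¹) • (s • I₁) := by rw [hmain]
    _ = s⁻¹ • I₁ := by rw [smul_smul, mul_assoc, inv_mul_cancel₀ hs0, mul_one]
end

section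
/- Let X be a reflexive complex Banach space, T a bounded linear operator on X, and m ≥ 1. Suppose there exists a sequence (λ_n) in the resolvent set of T with λ_n → 0 and sup_n |λ_n|^m ‖(T − λ_n)^{-1}‖ < ∞, and suppose ran T^m is closed. Then ran T^{m+1} = ran T^m. -/
open Filter Finset

lemma pinv_right {X : Type*} [NormedAddCommGroup X] [NormedSpace ℂ X] [CompleteSpace X]
    (B : X →L[ℂ] X) (h : Function.Bijective B) : B * pinv B = 1 := by
  ext x
  rw [pinv, dif_pos h]
  simpa using ContinuousLinearEquiv.ofBijective_apply_symm_apply B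
    (LinearMap.ker_eq_bot.mpr h.1) (LinearMap.range_eq_top.mpr h.2) x

lemma pinv_left {X : Type*} [NormedAddCommGroup X] [NormedSpace ℂ X] [CompleteSpace X]
    (B : X →L[ℂ] X) (h : Function.Bijective B) : pinv B * B = 1 := by
  ext x
  rw [pinv, dif_pos h]
  have h2 := (ContinuousLinearEquiv.ofBijective B (LinearMap.ker_eq_bot.mpr h.1)
      (LinearMap.range_eq_top.mpr h.2)).symm_apply_apply x
  simpa using h2

/-- Resolvent expansion identity. -/
lemma aux_resolvent_id {X : Type*} [NormedAddCommGroup X] [NormedSpace ℂ X] [CompleteSpace X]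
    (T R : X →L[ℂ] X) (μ : ℂ) (hR : (T - μ • (1 : X →L[ℂ] X)) * R = 1) :
    ∀ j : ℕ, μ ^ j • R = T ^ j * R - ∑ i ∈ Finset.range j, μ ^ (j - 1 - i) • T ^ i := by
  intro j
  induction j with
  | zero => simp
  | succ j ih =>
    have hcomm : (T - μ • (1 : X →L[ℂ] X)) * T ^ j = T ^ j * (T - μ • (1 : X →L[ℂ] X)) :=
      (((Commute.refl T).sub_left ((Commute.one_left T).smul_left μ)).pow_right j)
    have h1 : μ • (T ^ j * R) = T ^ (j + 1) * R - T ^ j := by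
      have e1 : μ • (T ^ j * R) = (μ • (1 : X →L[ℂ] X)) * (T ^ j * R) := by
        rw [smul_mul_assoc, one_mul]
      have e2 : (μ • (1 : X →L[ℂ] X)) = T - (T - μ • (1 : X →L[ℂ] X)) := by
        rw [sub_sub_cancel]
      rw [e1, e2, sub_mul]
      congr 1
      · rw [← mul_assoc, ← pow_succ']
      · rw [← mul_assoc, hcomm, mul_assoc, hR, mul_one]
    have h2 : μ • ∑ i ∈ Finset.range j, μ ^ (j - 1 - i) • T ^ i
        = ∑ i ∈ Finset.range j, μ ^ (j - i) • T ^ i := by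
      rw [Finset.smul_sum]
      refine Finset.sum_congr rfl fun i hi => ?_
      have hij := Finset.mem_range.mp hi
      rw [smul_smul, show j - i = (j - 1 - i) + 1 by omega, pow_succ']
    calc μ ^ (j + 1) • R = μ • (μ ^ j • R) := by rw [pow_succ', mul_smul]
      _ = μ • (T ^ j * R) - μ • ∑ i ∈ Finset.range j, μ ^ (j - 1 - i) • T ^ i := by
          rw [ih, smul_sub]
      _ = T ^ (j + 1) * R - T ^ j - ∑ i ∈ Finset.range j, μ ^ (j - i) • T ^ i := by
          rw [h1, h2]
      _ = T ^ (j + 1) * R - ∑ i ∈ Finset.range (j + 1), μ ^ (j + 1 - 1 - i) • T ^ i := by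
          rw [Finset.sum_range_succ]
          simp only [Nat.add_sub_cancel, Nat.sub_self, pow_zero, one_smul]
          rw [sub_add_eq_sub_sub, sub_right_comm]

/-- A cluster point of a convergent sequence is the limit. -/
lemma aux_cluster_eq {α : Type*} [TopologicalSpace α] [T2Space α] {u : ℕ → α} {a b : α}
    (ha : MapClusterPt a atTop u) (hb : Tendsto u atTop (nhds b)) : a = b := by
  have h1 : (nhds a ⊓ Filter.map u atTop).NeBot := ha
  have h2 : nhds a ⊓ Filter.map u atTop ≤ nhds a ⊓ nhds b := inf_le_inf_left _ hb
  exact t2_iff_nhds.mp inferInstance (h1.mono h2)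

/-- Cluster point of a sum, one sequence converging. -/
lemma aux_cluster_add {u w : ℕ → ℂ} {a b : ℂ}
    (hu : MapClusterPt a atTop u) (hw : Tendsto w atTop (nhds b)) :
    MapClusterPt (a + b) atTop (fun n => u n + w n) := by
  rw [mapClusterPt_iff_frequently] at hu ⊢
  intro s hs
  have hc : ContinuousAt (fun q : ℂ × ℂ => q.1 + q.2) (a, b) := continuous_add.continuousAt
  have hs' : (fun q : ℂ × ℂ => q.1 + q.2) ⁻¹' s ∈ nhds (a, b) := hc hs
  rw [nhds_prod_eq] at hs'
  obtain ⟨U, hU, V, hV, hUV⟩ := Filter.mem_prod_iff.mp hs'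
  have hwV : ∀ᶠ n in atTop, w n ∈ V := hw hV
  exact ((hu U hU).and_eventually hwV).mono fun n hn => hUV (Set.mk_mem_prod hn.1 hn.2)

/-- Separation of a point from a closed subspace. -/
lemma aux_sep {E : Type*} [NormedAddCommGroup E] [NormedSpace ℂ E]
    (p : Submodule ℂ E) (hp : IsClosed (p : Set E)) {x : E} (hx : x ∉ p) :
    ∃ f : E →L[ℂ] ℂ, (∀ y ∈ p, f y = 0) ∧ f x ≠ 0 := by
  have hconv : Convex ℝ (p : Set E) := (p.restrictScalars ℝ).convex
  obtain ⟨f, u, hfu, hux⟩ :=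
    RCLike.geometric_hahn_banach_closed_point (𝕜 := ℂ) hconv hp hx
  refine ⟨f, fun y hy => ?_, fun h0 => ?_⟩
  · by_contra hfy
    have hmem : (((u + 1 : ℝ) : ℂ) / f y) • y ∈ p := p.smul_mem _ hy
    have hlt := hfu _ hmem
    rw [map_smul, smul_eq_mul, div_mul_cancel₀ _ hfy] at hlt
    simp at hlt
    linarith
  · have h0' : RCLike.re (f x) = 0 := by rw [h0]; simp
    have hu0 : u < 0 := by rw [← h0']; exact hux
    have h00 := hfu 0 p.zero_mem
    rw [map_zero] at h00
    simp at h00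
    linarith

/-- Let `X` be a reflexive complex Banach space and `T` a bounded operator on `X`. If there
is a sequence `(λ_n)` in the resolvent set of `T` with `λ_n → 0` and
`sup_n |λ_n|^m ‖(T - λ_n)⁻¹‖ < ∞`, and if `ran T^m` is closed, then
`ran T^{m+1} = ran T^m`. -/
theorem stmt8 {X : Type*} [NormedAddCommGroup X] [NormedSpace ℂ X] [CompleteSpace X]
    (hrefl : Function.Surjective (NormedSpace.inclusionInDoubleDual ℂ X))
    (T : X →L[ℂ] X) (m : ℕ) (hm : 1 ≤ m) (lam : ℕ → ℂ)
    (hres : ∀ n, Function.Bijective (T - lam n • (1 : X →L[ℂ] X)))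
    (hlim : Filter.Tendsto lam Filter.atTop (nhds 0))
    (hbdd : ∃ C : ℝ, ∀ n, ‖lam n‖ ^ m * ‖pinv (T - lam n • (1 : X →L[ℂ] X))‖ ≤ C)
    (hclosed : IsClosed (LinearMap.range ((T ^ m : X →L[ℂ] X) : X →ₗ[ℂ] X) : Set X)) :
    LinearMap.range ((T ^ (m + 1) : X →L[ℂ] X) : X →ₗ[ℂ] X) = LinearMap.range ((T ^ m : X →L[ℂ] X) : X →ₗ[ℂ] X) := by
  obtain ⟨p, rfl⟩ : ∃ p, m = p + 1 := ⟨m - 1, (Nat.succ_pred_eq_of_pos hm).symm⟩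
  obtain ⟨C, hC⟩ := hbdd
  apply le_antisymm
  · rintro _ ⟨x, rfl⟩
    refine ⟨T x, ?_⟩
    have hps : (T ^ (p + 1 + 1)) x = (T ^ (p + 1)) (T x) := by rw [pow_succ]; rfl
    exact hps.symm
  rintro _ ⟨v, rfl⟩
  set J := NormedSpace.inclusionInDoubleDual ℂ X with hJ
  set A : ℕ → (X →L[ℂ] X) := fun n => T - lam n • 1 with hA
  set R : ℕ → (X →L[ℂ] X) := fun n => pinv (A n) with hR
  have hAR : ∀ n, A n * R n = 1 := fun n => pinv_right _ (hres n)
  set z : ℕ → X := fun n => (lam n) ^ (p + 1) • R n v with hz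
  set r : ℝ := C * ‖v‖ with hr
  -- bound on z
  have hzb : ∀ n, ‖z n‖ ≤ r := by
    intro n
    have h1 : ‖z n‖ = ‖lam n‖ ^ (p + 1) * ‖R n v‖ := by
      rw [hz]; simp [norm_smul]
    have h2 : ‖R n v‖ ≤ ‖R n‖ * ‖v‖ := (R n).le_opNorm v
    calc ‖z n‖ = ‖lam n‖ ^ (p + 1) * ‖R n v‖ := h1
      _ ≤ ‖lam n‖ ^ (p + 1) * (‖R n‖ * ‖v‖) :=
          mul_le_mul_of_nonneg_left h2 (pow_nonneg (norm_nonneg _) _)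
      _ = (‖lam n‖ ^ (p + 1) * ‖R n‖) * ‖v‖ := by ring
      _ ≤ C * ‖v‖ := mul_le_mul_of_nonneg_right (hC n) (norm_nonneg v)
  -- T z n → 0
  have hAz : ∀ n, A n (z n) = (lam n) ^ (p + 1) • v := by
    intro n
    have h1 := congrArg (fun O : X →L[ℂ] X => O v) (hAR n)
    simp only [ContinuousLinearMap.mul_apply, ContinuousLinearMap.one_apply] at h1
    rw [hz]
    simp only [map_smul, h1]
  have hTz : ∀ n, T (z n) = (lam n) ^ (p + 1) • v + lam n • z n := by
    intro n
    have h1 : T (z n) - lam n • z n = (lam n) ^ (p + 1) • v := by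
      rw [← hAz n, hA]; simp
    exact sub_eq_iff_eq_add.mp h1
  have hTz0 : Tendsto (fun n => T (z n)) atTop (nhds 0) := by
    have h1 : Tendsto (fun n => (lam n) ^ (p + 1) • v) atTop (nhds 0) := by
      have h2 : Tendsto (fun n => (lam n) ^ (p + 1)) atTop (nhds 0) := by
        have := hlim.pow (p + 1)
        rwa [zero_pow (p.succ_ne_zero)] at this
      simpa using h2.smul_const v
    have h2 : Tendsto (fun n => lam n • z n) atTop (nhds 0) := by
      apply squeeze_zero_norm (a := fun n => ‖lam n‖ * r)
      · intro n
        rw [norm_smul]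
        exact mul_le_mul_of_nonneg_left (hzb n) (norm_nonneg _)
      · have := (hlim.norm).mul_const r
        simpa using this
    have h3 := h1.add h2
    rw [add_zero] at h3
    simp only [← hTz] at h3
    exact h3
  -- the identity  T^(p+1) (R n v) = z n + w n
  set w : ℕ → X := fun n =>
    (∑ i ∈ Finset.range (p + 1), (lam n) ^ (p + 1 - 1 - i) • T ^ i) v with hw
  have hkey : ∀ n, (T ^ (p + 1)) (R n v) = z n + w n := by
    intro n
    have h1 := aux_resolvent_id T (R n) (lam n) (hAR n) (p + 1)
    have h2 := congrArg (fun O : X →L[ℂ] X => O v) h1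
    simp only [ContinuousLinearMap.smul_apply, ContinuousLinearMap.sub_apply,
      ContinuousLinearMap.mul_apply] at h2
    rw [hz, hw]
    simp only
    rw [h2]
    abel
  -- w n → T^p v
  have hwlim : Tendsto w atTop (nhds ((T ^ p) v)) := by
    have hcont : Continuous fun μ : ℂ =>
        (∑ i ∈ Finset.range (p + 1), μ ^ (p + 1 - 1 - i) • T ^ i) v := by
      simp only [ContinuousLinearMap.coe_sum', Finset.sum_apply,
        ContinuousLinearMap.smul_apply]
      exact continuous_finset_sum _ fun i _ => (continuous_pow _).smul continuous_const
    have h0 : (∑ i ∈ Finset.range (p + 1), (0 : ℂ) ^ (p + 1 - 1 - i) • T ^ i) v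
        = (T ^ p) v := by
      rw [Finset.sum_eq_single_of_mem p (Finset.self_mem_range_succ p)]
      · simp
      · intro i hi hip
        have hne : p - i ≠ 0 := by
          have := Finset.mem_range.mp hi
          omega
        simp [zero_pow hne]
    have h3 := (hcont.tendsto 0).comp hlim
    rw [h0] at h3
    exact h3
  -- weak-* cluster point
  set u : ℕ → WeakDual ℂ (StrongDual ℂ X) :=
    fun n => StrongDual.toWeakDual (J (z n)) with hu
  have hmem : ∀ n, u n ∈ WeakDual.toStrongDual ⁻¹' Metric.closedBall 0 r := by
    intro n
    simp only [Set.mem_preimage, Metric.mem_closedBall, dist_zero_right]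
    change dist (J (z n)) 0 ≤ r
    refine le_trans (le_of_eq (dist_zero_right (J (z n)))) ?_
    calc ‖J (z n)‖ ≤ ‖z n‖ := NormedSpace.double_dual_bound ℂ X _
      _ ≤ r := hzb n
  have hub : Filter.map u atTop ≤ Filter.principal
      (WeakDual.toStrongDual ⁻¹' Metric.closedBall 0 r) := by
    rw [Filter.le_principal_iff, Filter.mem_map]
    exact Filter.Eventually.of_forall hmem
  obtain ⟨φ, -, hφ⟩ :=
    (WeakDual.isCompact_closedBall (𝕜 := ℂ) (E := StrongDual ℂ X)
      0 r).exists_mapClusterPt hub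
  obtain ⟨x₀, hx₀⟩ := hrefl (WeakDual.toStrongDual φ)
  have heval : ∀ f : StrongDual ℂ X, MapClusterPt (f x₀) atTop fun n => f (z n) := by
    intro f
    have hc : ContinuousAt (fun ψ : WeakDual ℂ (StrongDual ℂ X) => ψ f) φ :=
      (WeakDual.eval_continuous f).continuousAt
    have h1 := hφ.continuousAt_comp hc
    have h2 : φ f = f x₀ := by
      have : (J x₀) f = f x₀ := rfl
      rw [← this, hx₀]
      rfl
    have h3 : ((fun ψ : WeakDual ℂ (StrongDual ℂ X) => ψ f) ∘ u)
        = fun n => f (z n) := rfl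
    rwa [h2, h3] at h1
  -- T x₀ = 0
  have hTx₀ : T x₀ = 0 := by
    apply NormedSpace.eq_zero_of_forall_dual_eq_zero ℂ
    intro f
    have hclu := heval (f.comp T)
    have htend : Tendsto (fun n => (f.comp T) (z n)) atTop (nhds 0) := by
      have h1 := (f.continuous.tendsto 0).comp hTz0
      rw [map_zero] at h1
      exact h1
    have := aux_cluster_eq hclu htend
    simpa using this
  -- membership
  have hymem : x₀ + (T ^ p) v ∈ LinearMap.range ((T ^ (p + 1) : X →L[ℂ] X) : X →ₗ[ℂ] X) := by
    by_contra hnot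
    obtain ⟨f, hf0, hfny⟩ := aux_sep _ hclosed hnot
    apply hfny
    have h1 : ∀ n, f (z n) + f (w n) = 0 := by
      intro n
      rw [← map_add, ← hkey n]
      exact hf0 _ ⟨R n v, rfl⟩
    have htend2 : Tendsto (fun n => f (w n)) atTop (nhds (f ((T ^ p) v))) := by
      exact (f.continuous.tendsto _).comp hwlim
    have hclu := aux_cluster_add (heval f) htend2
    rw [show (fun n => f (z n) + f (w n)) = fun _ => (0 : ℂ) from funext h1] at hclu
    have h2 : f x₀ + f ((T ^ p) v) = 0 := aux_cluster_eq hclu tendsto_const_nhds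
    rw [map_add]
    exact h2
  obtain ⟨a, ha⟩ := hymem
  refine ⟨a, ?_⟩
  calc (T ^ (p + 1 + 1)) a = T ((T ^ (p + 1)) a) := by
        rw [pow_succ']; rfl
    _ = T x₀ + T ((T ^ p) v) := by rw [show (T ^ (p + 1)) a = x₀ + (T ^ p) v from ha, map_add]
    _ = (T ^ (p + 1)) v := by
        rw [hTx₀, zero_add, ← ContinuousLinearMap.mul_apply, ← pow_succ']
end

section
/- Let X be a complex Banach space and let E, A be bounded linear operators on X such that the regular pencil (E,A) has finite index m = 1. Then for every x_0 ∈ X the initial value problem (d/dt)(Ex) = Ax, Ex(0) = Ex_0 has a unique solution. -/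
open NormedSpace Filter Topology Set

/-- `‖(sE - A)⁻¹‖ = O(|s|^j)` as `|s| → ∞`. -/
def ResBound {X : Type*} [NormedAddCommGroup X] [NormedSpace ℂ X] [CompleteSpace X]
    (E A : X →L[ℂ] X) (j : ℤ) : Prop :=
  ∃ C R : ℝ, 0 < C ∧ 0 < R ∧ ∀ s : ℂ, R ≤ ‖s‖ → ‖pinv (s • E - A)‖ ≤ C * ‖s‖ ^ j

/-- The regular pencil `(E,A)` has finite index `m`. -/
def FiniteIndex {X : Type*} [NormedAddCommGroup X] [NormedSpace ℂ X] [CompleteSpace X]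
    (E A : X →L[ℂ] X) (m : ℕ) : Prop :=
  Bornology.IsBounded {s : ℂ | ¬ Function.Bijective (s • E - A)} ∧
    ResBound E A ((m : ℤ) - 1) ∧ ¬ ResBound E A ((m : ℤ) - 2)

/-- `x : [0,∞) → X` is a solution of the IVP `(d/dt)(Ex) = Ax`, `Ex(0) = Ex₀`. -/
def IsIVPSol {X : Type*} [NormedAddCommGroup X] [NormedSpace ℂ X]
    (E A : X →L[ℂ] X) (x₀ : X) (x : ℝ → X) : Prop :=
  ContinuousOn x (Set.Ici 0) ∧
  (∀ t : ℝ, 0 ≤ t → HasDerivWithinAt (fun τ => E (x τ)) (A (x t)) (Set.Ici 0) t) ∧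
  E (x 0) = E x₀

section Aux

variable {X : Type*} [NormedAddCommGroup X] [NormedSpace ℂ X] [CompleteSpace X]

lemma pinv_mul_cancel {B : X →L[ℂ] X} (h : Function.Bijective B) : pinv B * B = 1 := by
  rw [pinv, dif_pos h]
  ext v
  simp only [ContinuousLinearMap.mul_apply, ContinuousLinearMap.one_apply,
    ContinuousLinearEquiv.coe_coe]
  exact (ContinuousLinearEquiv.ofBijective B (LinearMap.ker_eq_bot.mpr h.1)
    (LinearMap.range_eq_top.mpr h.2)).symm_apply_apply v

lemma mul_pinv_cancel {B : X →L[ℂ] X} (h : Function.Bijective B) : B * pinv B = 1 := by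
  rw [pinv, dif_pos h]
  ext v
  simp only [ContinuousLinearMap.mul_apply, ContinuousLinearMap.one_apply,
    ContinuousLinearEquiv.coe_coe]
  exact (ContinuousLinearEquiv.ofBijective B (LinearMap.ker_eq_bot.mpr h.1)
    (LinearMap.range_eq_top.mpr h.2)).apply_symm_apply v

lemma ringInverse_of_eq {M₀ : Type*} [MonoidWithZero M₀] {a b : M₀} (h1 : a * b = 1)
    (h2 : b * a = 1) : Ring.inverse a = b := by
  have ha : a = ((⟨a, b, h1, h2⟩ : M₀ˣ) : M₀) := rfl
  rw [ha, Ring.inverse_unit]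
  rfl

end Aux

set_option maxHeartbeats 1000000 in
/-- If the regular pencil `(E,A)` has finite index `m = 1`, then for every `x₀ ∈ X` the IVP
`(d/dt)(Ex) = Ax`, `Ex(0) = Ex₀` has a unique solution. -/
theorem stmt16 {X : Type*} [NormedAddCommGroup X] [NormedSpace ℂ X] [CompleteSpace X]
    (E A : X →L[ℂ] X) (hreg : ∃ μ : ℂ, Function.Bijective (μ • E - A))
    (hidx : FiniteIndex E A 1) (x₀ : X) :
    ∃ x : ℝ → X, IsIVPSol E A x₀ x ∧
      ∀ y : ℝ → X, IsIVPSol E A x₀ y → ∀ t : ℝ, 0 ≤ t → y t = x t := by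
  classical
  obtain ⟨μ, hμ⟩ := hreg
  set B : X →L[ℂ] X := pinv (μ • E - A) with hBdef
  have hBl : B * (μ • E - A) = 1 := pinv_mul_cancel hμ
  have hBr : (μ • E - A) * B = 1 := mul_pinv_cancel hμ
  set Eh : X →L[ℂ] X := B * E with hEhdef
  set Ah : X →L[ℂ] X := μ • Eh - 1 with hAhdef
  have hBA : B * A = Ah := by
    have h1 : μ • Eh - B * A = 1 := by
      rw [hEhdef, ← mul_smul_comm, ← mul_sub, hBl]
    rw [hAhdef, ← h1]; abel
  -- resolvent bounds
  obtain ⟨hbd, hres1, -⟩ := hidx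
  obtain ⟨C, R, hC, hR, hCR⟩ := hres1
  obtain ⟨R₀, hR₀⟩ := hbd.subset_closedBall 0
  set R₁ : ℝ := max R R₀ + 1 with hR₁def
  have hRR₁ : R ≤ R₁ := le_trans (le_max_left _ _) (by linarith)
  have hR₀R₁ : R₀ < R₁ := lt_of_le_of_lt (le_max_right _ _) (by linarith)
  have hR₁pos : 0 < R₁ := lt_of_lt_of_le hR hRR₁
  set r : ℝ := (R₁ + ‖μ‖)⁻¹ with hrdef
  have hrpos : 0 < r := by
    rw [hrdef]; positivity
  set C₁ : ℝ := C * ‖μ • E - A‖ + 1 with hC₁def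
  set Q : Set ℂ := {ζ : ℂ | ζ ≠ 0 ∧ ‖ζ‖ ≤ r} with hQdef
  set F : ℂ → (X →L[ℂ] X) := fun ζ => Ring.inverse (Eh - ζ • 1) with hFdef
  -- the key resolvent estimate
  have key : ∀ ζ ∈ Q, IsUnit (Eh - ζ • 1) ∧ ‖F ζ‖ ≤ C₁ / ‖ζ‖ := by
    rintro ζ ⟨hζ0, hζr⟩
    have hζn : (0:ℝ) < ‖ζ‖ := norm_pos_iff.mpr hζ0
    set s : ℂ := μ - ζ⁻¹ with hsdef
    have hsnorm : R₁ ≤ ‖s‖ := by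
      have h1 : ‖ζ⁻¹‖ - ‖μ‖ ≤ ‖s‖ := by
        calc ‖ζ⁻¹‖ - ‖μ‖ ≤ ‖ζ⁻¹ - μ‖ := norm_sub_norm_le _ _
        _ = ‖s‖ := by rw [hsdef, norm_sub_rev]
      have h2 : R₁ + ‖μ‖ ≤ ‖ζ⁻¹‖ := by
        rw [norm_inv]
        rw [hrdef] at hζr
        have := (le_inv_comm₀ (by positivity) hζn).mpr hζr
        linarith [this]
      linarith
    have hsbij : Function.Bijective ((s • E - A : X →L[ℂ] X)) := by
      by_contra hcon
      have : s ∈ Metric.closedBall (0:ℂ) R₀ := hR₀ hcon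
      rw [Metric.mem_closedBall, dist_zero_right] at this
      linarith
    have hspinv : ‖pinv (s • E - A)‖ ≤ C := by
      have := hCR s (le_trans hRR₁ hsnorm)
      simpa using this
    have hsμ : s - μ = -ζ⁻¹ := by rw [hsdef]; ring
    have hBs : B * (s • E - A) = (s - μ) • Eh + 1 := by
      rw [mul_sub, mul_smul_comm, hBA, hAhdef, hsdef]
      module
    have hEq : Eh - ζ • 1 = (-ζ) • (B * (s • E - A)) := by
      rw [hBs, hsμ, smul_add, smul_smul]
      have hone : -ζ * -ζ⁻¹ = 1 := by field_simp
      rw [hone, one_smul]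
      module
    set J : X →L[ℂ] X := (-ζ)⁻¹ • (pinv (s • E - A) * (μ • E - A)) with hJdef
    have hζne : (-ζ) ≠ 0 := neg_ne_zero.mpr hζ0
    have h1 : (Eh - ζ • 1) * J = 1 := by
      rw [hEq, hJdef, smul_mul_assoc, mul_smul_comm, smul_smul, mul_inv_cancel₀ hζne, one_smul]
      calc B * (s • E - A) * (pinv (s • E - A) * (μ • E - A))
          = B * ((s • E - A) * pinv (s • E - A)) * (μ • E - A) := by
            simp only [mul_assoc]
        _ = 1 := by rw [mul_pinv_cancel hsbij, mul_one, hBl]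
    have h2 : J * (Eh - ζ • 1) = 1 := by
      rw [hEq, hJdef, smul_mul_assoc, mul_smul_comm, smul_smul, inv_mul_cancel₀ hζne, one_smul]
      calc pinv (s • E - A) * (μ • E - A) * (B * (s • E - A))
          = pinv (s • E - A) * ((μ • E - A) * B) * (s • E - A) := by
            simp only [mul_assoc]
        _ = 1 := by rw [hBr, mul_one, pinv_mul_cancel hsbij]
    refine ⟨⟨⟨_, J, h1, h2⟩, rfl⟩, ?_⟩
    have hFJ : F ζ = J := ringInverse_of_eq h1 h2
    rw [hFJ, hJdef]
    calc ‖(-ζ)⁻¹ • (pinv (s • E - A) * (μ • E - A))‖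
        = ‖ζ‖⁻¹ * ‖pinv (s • E - A) * (μ • E - A)‖ := by
          rw [norm_smul ((-ζ)⁻¹) (pinv (s • E - A) * (μ • E - A)), norm_inv, norm_neg]
      _ ≤ ‖ζ‖⁻¹ * (C * ‖μ • E - A‖) := by
          gcongr
          calc ‖pinv (s • E - A) * (μ • E - A)‖ ≤ ‖pinv (s • E - A)‖ * ‖μ • E - A‖ :=
              norm_mul_le _ _
            _ ≤ C * ‖μ • E - A‖ := by gcongr
      _ ≤ ‖ζ‖⁻¹ * C₁ := by
          gcongr
          rw [hC₁def]; linarith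
      _ = C₁ / ‖ζ‖ := by rw [inv_mul_eq_div]
  -- Q is eventually in the punctured neighborhood of 0
  have hQmem : ∀ᶠ ζ in 𝓝[≠] (0:ℂ), ζ ∈ Q := by
    have h1 : ∀ᶠ ζ in 𝓝 (0:ℂ), ‖ζ‖ ≤ r := by
      filter_upwards [Metric.closedBall_mem_nhds (0:ℂ) hrpos] with ζ hζ
      simpa [dist_zero_right] using hζ
    filter_upwards [eventually_mem_nhdsWithin, eventually_nhdsWithin_of_eventually_nhds h1]
      with ζ h2 h3
    exact ⟨by simpa using h2, h3⟩
  have hz0 : Tendsto (fun ζ : ℂ => ζ) (𝓝[≠] (0:ℂ)) (𝓝 0) :=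
    tendsto_nhdsWithin_of_tendsto_nhds tendsto_id
  -- basic resolvent identities
  have hFr : ∀ ζ ∈ Q, (Eh - ζ • 1) * F ζ = 1 := fun ζ hζ => Ring.mul_inverse_cancel _ (key ζ hζ).1
  have hFl : ∀ ζ ∈ Q, F ζ * (Eh - ζ • 1) = 1 := fun ζ hζ => Ring.inverse_mul_cancel _ (key ζ hζ).1
  have hEhF : ∀ ζ ∈ Q, Eh * F ζ = 1 + ζ • F ζ := by
    intro ζ hζ
    calc Eh * F ζ = (Eh - ζ • 1) * F ζ + ζ • (1 * F ζ) := by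
          rw [sub_mul, smul_mul_assoc]; abel
      _ = 1 + ζ • F ζ := by rw [hFr ζ hζ, one_mul]
  have hFEh : ∀ ζ ∈ Q, F ζ * Eh = 1 + ζ • F ζ := by
    intro ζ hζ
    calc F ζ * Eh = F ζ * (Eh - ζ • 1) + ζ • (F ζ * 1) := by
          rw [mul_sub, mul_smul_comm]; abel
      _ = 1 + ζ • F ζ := by rw [hFl ζ hζ, mul_one]
  have hResId : ∀ ζ ∈ Q, ∀ η ∈ Q, F ζ - F η = (ζ - η) • (F ζ * F η) := by
    intro ζ hζ η hη
    calc F ζ - F η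
        = F ζ * ((Eh - η • 1) * F η) - F ζ * (Eh - ζ • 1) * F η := by
          rw [hFr η hη, hFl ζ hζ, mul_one, one_mul]
      _ = (ζ - η) • (F ζ * F η) := by
          rw [← mul_assoc, ← sub_mul, ← mul_sub]
          have h1 : (Eh - η • 1) - (Eh - ζ • 1) = (ζ - η) • (1 : X →L[ℂ] X) := by module
          rw [h1, mul_smul_comm, mul_one, smul_mul_assoc]
  have hFcomm : ∀ ζ ∈ Q, ∀ η ∈ Q, F ζ * F η = F η * F ζ := by
    intro ζ hζ η hη
    rcases eq_or_ne ζ η with rfl | hne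
    · rfl
    · have h1 := hResId ζ hζ η hη
      have h2 := hResId η hη ζ hζ
      have h3 : (ζ - η) • (F ζ * F η) = (ζ - η) • (F η * F ζ) := by
        rw [← h1, ← neg_sub (F η) (F ζ), h2, ← neg_smul, neg_sub]
      exact smul_right_injective _ (sub_ne_zero.mpr hne) h3
  -- differentiability of the resolvent
  have hdF : ∀ ζ ∈ Q, DifferentiableAt ℂ F ζ := by
    intro ζ hζ
    have h1 : DifferentiableAt ℂ (fun ζ : ℂ => Eh - ζ • 1) ζ :=
      (differentiableAt_const Eh).sub (differentiableAt_id.smul_const 1)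
    have h2 := (differentiableAt_inverse (key ζ hζ).1).comp ζ h1
    exact h2
  set g : ℂ → (X →L[ℂ] X) := fun ζ => (-ζ) • F ζ with hgdef
  have hgd : ∀ᶠ ζ in 𝓝[≠] (0:ℂ), DifferentiableAt ℂ g ζ := by
    filter_upwards [hQmem] with ζ hζ
    exact (differentiableAt_id.neg).smul (hdF ζ hζ)
  have hgbound : ∀ ζ ∈ Q, ‖g ζ‖ ≤ C₁ := by
    intro ζ hζ
    have hζn : (0:ℝ) < ‖ζ‖ := norm_pos_iff.mpr hζ.1
    calc ‖g ζ‖ = ‖ζ‖ * ‖F ζ‖ := by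
          rw [hgdef]
          simpa using norm_smul (-ζ) (F ζ)
      _ ≤ ‖ζ‖ * (C₁ / ‖ζ‖) := by gcongr; exact (key ζ hζ).2
      _ = C₁ := by rw [mul_comm, div_mul_cancel₀ _ (ne_of_gt hζn)]
  obtain ⟨P, htP⟩ : ∃ P : X →L[ℂ] X, Tendsto g (𝓝[≠] (0:ℂ)) (𝓝 P) := by
    refine ⟨_, Complex.tendsto_limUnder_of_differentiable_on_punctured_nhds_of_bounded_under
      hgd ?_⟩
    refine ⟨C₁ + ‖g 0‖, ?_⟩
    rw [Filter.eventually_map]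
    filter_upwards [hQmem] with ζ hζ
    calc ‖g ζ - g 0‖ ≤ ‖g ζ‖ + ‖g 0‖ := norm_sub_le _ _
      _ ≤ C₁ + ‖g 0‖ := by linarith [hgbound ζ hζ]
  -- Eh * P = 0 and P * Eh = 0
  have hEhP : Eh * P = 0 := by
    have h1 : Tendsto (fun ζ => Eh * g ζ) (𝓝[≠] (0:ℂ)) (𝓝 (Eh * P)) :=
      tendsto_const_nhds.mul htP
    have he : ∀ᶠ ζ in 𝓝[≠] (0:ℂ), (-ζ) • (1 : X →L[ℂ] X) + ζ • g ζ = Eh * g ζ := by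
      filter_upwards [hQmem] with ζ hζ
      simp only [hgdef]
      rw [mul_smul_comm, hEhF ζ hζ]
      module
    have h3 : Tendsto (fun ζ : ℂ => (-ζ) • (1 : X →L[ℂ] X) + ζ • g ζ) (𝓝[≠] (0:ℂ))
        (𝓝 ((-(0:ℂ)) • (1 : X →L[ℂ] X) + (0:ℂ) • P)) :=
      ((hz0.neg).smul_const 1).add (hz0.smul htP)
    rw [tendsto_congr' he] at h3
    have h4 : (-(0:ℂ)) • (1 : X →L[ℂ] X) + (0:ℂ) • P = 0 := by simp
    rw [h4] at h3
    exact tendsto_nhds_unique h1 h3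
  have hPEh : P * Eh = 0 := by
    have h1 : Tendsto (fun ζ => g ζ * Eh) (𝓝[≠] (0:ℂ)) (𝓝 (P * Eh)) :=
      htP.mul tendsto_const_nhds
    have he : ∀ᶠ ζ in 𝓝[≠] (0:ℂ), (-ζ) • (1 : X →L[ℂ] X) + ζ • g ζ = g ζ * Eh := by
      filter_upwards [hQmem] with ζ hζ
      simp only [hgdef]
      rw [smul_mul_assoc, hFEh ζ hζ]
      module
    have h3 : Tendsto (fun ζ : ℂ => (-ζ) • (1 : X →L[ℂ] X) + ζ • g ζ) (𝓝[≠] (0:ℂ))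
        (𝓝 ((-(0:ℂ)) • (1 : X →L[ℂ] X) + (0:ℂ) • P)) :=
      ((hz0.neg).smul_const 1).add (hz0.smul htP)
    rw [tendsto_congr' he] at h3
    have h4 : (-(0:ℂ)) • (1 : X →L[ℂ] X) + (0:ℂ) • P = 0 := by simp
    rw [h4] at h3
    exact tendsto_nhds_unique h1 h3
  -- F η * P = -η⁻¹ • P and P * F η = -η⁻¹ • P
  have hFPaux : ∀ η ∈ Q, (F η * P = (-η⁻¹) • P ∧ P * F η = (-η⁻¹) • P) := by
    intro η hη
    have h0η : (0:ℂ) - η ≠ 0 := by simpa using hη.1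
    have hinv : Tendsto (fun ζ : ℂ => (ζ - η)⁻¹) (𝓝[≠] (0:ℂ)) (𝓝 (((0:ℂ) - η)⁻¹)) :=
      ((hz0.sub_const η).inv₀ h0η)
    have hlim : Tendsto (fun ζ : ℂ => (ζ - η)⁻¹ • g ζ + (ζ * (ζ - η)⁻¹) • F η) (𝓝[≠] (0:ℂ))
        (𝓝 (((0:ℂ) - η)⁻¹ • P + ((0:ℂ) * ((0:ℂ) - η)⁻¹) • F η)) :=
      (hinv.smul htP).add ((hz0.mul hinv).smul_const (F η))
    have hval : ((0:ℂ) - η)⁻¹ • P + ((0:ℂ) * ((0:ℂ) - η)⁻¹) • F η = (-η⁻¹) • P := by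
      simp [inv_neg]
    rw [hval] at hlim
    have hne : ∀ᶠ ζ in 𝓝[≠] (0:ℂ), ζ ≠ η := by
      apply eventually_nhdsWithin_of_eventually_nhds
      exact isOpen_compl_singleton.eventually_mem
        (Set.mem_compl_singleton_iff.mpr (Ne.symm hη.1))
    have hkey : ∀ᶠ ζ in 𝓝[≠] (0:ℂ),
        (ζ - η)⁻¹ • g ζ + (ζ * (ζ - η)⁻¹) • F η = F η * g ζ ∧
        (ζ - η)⁻¹ • g ζ + (ζ * (ζ - η)⁻¹) • F η = g ζ * F η := by
      filter_upwards [hQmem, hne] with ζ hζ hζη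
      have hζη' : ζ - η ≠ 0 := sub_ne_zero.mpr hζη
      have h4 : F ζ * F η = (ζ - η)⁻¹ • (F ζ - F η) := by
        rw [hResId ζ hζ η hη, inv_smul_smul₀ hζη']
      constructor
      · simp only [hgdef]
        rw [mul_smul_comm, hFcomm η hη ζ hζ, h4]
        module
      · simp only [hgdef]
        rw [smul_mul_assoc, h4]
        module
    constructor
    · have h1 : Tendsto (fun ζ => F η * g ζ) (𝓝[≠] (0:ℂ)) (𝓝 (F η * P)) :=
        tendsto_const_nhds.mul htP
      have h2 := hlim
      rw [tendsto_congr' (hkey.mono fun ζ h => h.1)] at h2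
      exact tendsto_nhds_unique h1 h2
    · have h1 : Tendsto (fun ζ => g ζ * F η) (𝓝[≠] (0:ℂ)) (𝓝 (P * F η)) :=
        htP.mul tendsto_const_nhds
      have h2 := hlim
      rw [tendsto_congr' (hkey.mono fun ζ h => h.2)] at h2
      exact tendsto_nhds_unique h1 h2
  -- P is idempotent
  have hPP : P * P = P := by
    have hgP : ∀ᶠ η in 𝓝[≠] (0:ℂ), g η * P = P := by
      filter_upwards [hQmem] with η hη
      simp only [hgdef]
      rw [smul_mul_assoc, (hFPaux η hη).1, smul_smul]
      rw [neg_mul_neg, mul_inv_cancel₀ hη.1, one_smul]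
    have h1 : Tendsto (fun η => g η * P) (𝓝[≠] (0:ℂ)) (𝓝 (P * P)) :=
      htP.mul tendsto_const_nhds
    have h2 : Tendsto (fun η => g η * P) (𝓝[≠] (0:ℂ)) (𝓝 P) := by
      rw [tendsto_congr' hgP]
      exact tendsto_const_nhds
    exact tendsto_nhds_unique h1 h2
  -- construction of S
  set H : ℂ → (X →L[ℂ] X) := fun ζ => F ζ + ζ⁻¹ • P with hHdef
  have hdH : ∀ᶠ ζ in 𝓝[≠] (0:ℂ), DifferentiableAt ℂ H ζ := by
    filter_upwards [hQmem] with ζ hζ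
    exact (hdF ζ hζ).add ((differentiableAt_inv hζ.1).smul_const P)
  have hsm : Tendsto (fun ζ : ℂ => ζ • (H ζ - H 0)) (𝓝[≠] (0:ℂ)) (𝓝 0) := by
    have he : ∀ᶠ ζ in 𝓝[≠] (0:ℂ), (-(g ζ) + P) - ζ • H 0 = ζ • (H ζ - H 0) := by
      filter_upwards [hQmem] with ζ hζ
      have hζH : ζ • H ζ = -(g ζ) + P := by
        simp only [hHdef, hgdef]
        rw [smul_add, smul_smul, mul_inv_cancel₀ hζ.1, one_smul]
        module
      rw [smul_sub, hζH]
    have h3 : Tendsto (fun ζ : ℂ => (-(g ζ) + P) - ζ • H 0) (𝓝[≠] (0:ℂ))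
        (𝓝 ((-P + P) - (0:ℂ) • H 0)) :=
      ((htP.neg).add tendsto_const_nhds).sub (hz0.smul_const (H 0))
    rw [tendsto_congr' he] at h3
    have h4 : (-P + P) - (0:ℂ) • H 0 = 0 := by simp
    rw [h4] at h3
    exact h3
  have ho : (fun ζ => H ζ - H 0) =o[𝓝[≠] (0:ℂ)] fun ζ => (ζ - 0)⁻¹ := by
    rw [Asymptotics.isLittleO_iff]
    intro c hc
    have h0 : Tendsto (fun ζ : ℂ => ‖ζ • (H ζ - H 0)‖) (𝓝[≠] (0:ℂ)) (𝓝 0) := by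
      simpa using hsm.norm
    filter_upwards [h0.eventually (gt_mem_nhds hc), eventually_mem_nhdsWithin] with ζ h5 h6
    have hζ0 : ζ ≠ 0 := by simpa using h6
    have hn : (0:ℝ) < ‖ζ‖ := norm_pos_iff.mpr hζ0
    have h5' : ‖ζ‖ * ‖H ζ - H 0‖ < c := lt_of_eq_of_lt (norm_smul ζ (H ζ - H 0)).symm h5
    rw [sub_zero, norm_inv]
    have h7 : ‖H ζ - H 0‖ ≤ c / ‖ζ‖ := (le_div_iff₀ hn).mpr (by nlinarith)
    calc ‖H ζ - H 0‖ ≤ c / ‖ζ‖ := h7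
      _ = c * ‖ζ‖⁻¹ := by rw [div_eq_mul_inv]
  obtain ⟨S, htS⟩ : ∃ S : X →L[ℂ] X, Tendsto H (𝓝[≠] (0:ℂ)) (𝓝 S) :=
    ⟨_, Complex.tendsto_limUnder_of_differentiable_on_punctured_nhds_of_isLittleO hdH
      (by simpa using ho)⟩
  -- identities for S
  have hEhS : Eh * S = 1 - P := by
    have h1 : Tendsto (fun ζ => Eh * H ζ) (𝓝[≠] (0:ℂ)) (𝓝 (Eh * S)) :=
      tendsto_const_nhds.mul htS
    have he : ∀ᶠ ζ in 𝓝[≠] (0:ℂ), 1 - g ζ = Eh * H ζ := by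
      filter_upwards [hQmem] with ζ hζ
      simp only [hHdef, hgdef]
      rw [mul_add, mul_smul_comm, hEhP, smul_zero, add_zero, hEhF ζ hζ]
      module
    have h2 : Tendsto (fun ζ => 1 - g ζ) (𝓝[≠] (0:ℂ)) (𝓝 (1 - P)) :=
      tendsto_const_nhds.sub htP
    rw [tendsto_congr' he] at h2
    exact tendsto_nhds_unique h1 h2
  have hSEh : S * Eh = 1 - P := by
    have h1 : Tendsto (fun ζ => H ζ * Eh) (𝓝[≠] (0:ℂ)) (𝓝 (S * Eh)) :=
      htS.mul tendsto_const_nhds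
    have he : ∀ᶠ ζ in 𝓝[≠] (0:ℂ), 1 - g ζ = H ζ * Eh := by
      filter_upwards [hQmem] with ζ hζ
      simp only [hHdef, hgdef]
      rw [add_mul, smul_mul_assoc, hPEh, smul_zero, add_zero, hFEh ζ hζ]
      module
    have h2 : Tendsto (fun ζ => 1 - g ζ) (𝓝[≠] (0:ℂ)) (𝓝 (1 - P)) :=
      tendsto_const_nhds.sub htP
    rw [tendsto_congr' he] at h2
    exact tendsto_nhds_unique h1 h2
  have hSP : S * P = 0 := by
    have h1 : Tendsto (fun η => H η * P) (𝓝[≠] (0:ℂ)) (𝓝 (S * P)) :=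
      htS.mul tendsto_const_nhds
    have he : ∀ᶠ η in 𝓝[≠] (0:ℂ), (0 : X →L[ℂ] X) = H η * P := by
      filter_upwards [hQmem] with η hη
      simp only [hHdef]
      rw [add_mul, smul_mul_assoc, hPP, (hFPaux η hη).1]
      module
    have h2 : Tendsto (fun η : ℂ => (0 : X →L[ℂ] X)) (𝓝[≠] (0:ℂ)) (𝓝 0) := tendsto_const_nhds
    rw [tendsto_congr' he] at h2
    exact tendsto_nhds_unique h1 h2
  have hPS : P * S = 0 := by
    have h1 : Tendsto (fun η => P * H η) (𝓝[≠] (0:ℂ)) (𝓝 (P * S)) :=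
      tendsto_const_nhds.mul htS
    have he : ∀ᶠ η in 𝓝[≠] (0:ℂ), (0 : X →L[ℂ] X) = P * H η := by
      filter_upwards [hQmem] with η hη
      simp only [hHdef]
      rw [mul_add, mul_smul_comm, hPP, (hFPaux η hη).2]
      module
    have h2 : Tendsto (fun η : ℂ => (0 : X →L[ℂ] X)) (𝓝[≠] (0:ℂ)) (𝓝 0) := tendsto_const_nhds
    rw [tendsto_congr' he] at h2
    exact tendsto_nhds_unique h1 h2
  -- the generator G and its properties
  set G : X →L[ℂ] X := S * Ah with hGdef
  have hPAh : P * Ah = -P := by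
    rw [hAhdef, mul_sub, mul_smul_comm, hPEh, smul_zero, mul_one, zero_sub]
  have hAhP : Ah * P = -P := by
    rw [hAhdef, sub_mul, smul_mul_assoc, hEhP, smul_zero, one_mul, zero_sub]
  have hPG : P * G = 0 := by rw [hGdef, ← mul_assoc, hPS, zero_mul]
  have hGP : G * P = 0 := by rw [hGdef, mul_assoc, hAhP, mul_neg, hSP, neg_zero]
  have hEhG : Eh * G = Ah + P := by
    rw [hGdef, ← mul_assoc, hEhS, sub_mul, one_mul, hPAh, sub_neg_eq_add]
  have hEP0 : E * P = (0 : X →L[ℂ] X) := by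
    have h1 : B * (E * P) = 0 := by
      rw [← mul_assoc, ← hEhdef]
      exact hEhP
    calc E * P = (μ • E - A) * B * (E * P) := by rw [hBr, one_mul]
      _ = (μ • E - A) * (B * (E * P)) := by rw [mul_assoc]
      _ = 0 := by rw [h1, mul_zero]
  -- the solution
  set c₀ : X := x₀ - P x₀ with hc₀def
  set x : ℝ → X := fun t => (exp (t • G)) c₀ with hxdef
  set rS : (X →L[ℂ] X) →L[ℝ] (X →L[ℝ] X) :=
    (ContinuousLinearMap.restrictScalarsIsometry ℂ X X ℝ ℝ).toContinuousLinearMap with hrSdef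
  have hcomp : ∀ (T : X →L[ℂ] X) (f : ℝ → X) (d : X) (τ : ℝ),
      HasDerivWithinAt f d (Set.Ici 0) τ →
      HasDerivWithinAt (fun σ => T (f σ)) (T d) (Set.Ici 0) τ := by
    intro T f d τ hf
    exact (T.restrictScalars ℝ).hasFDerivAt.comp_hasDerivWithinAt τ hf
  have hPc₀ : P c₀ = 0 := by
    rw [hc₀def, map_sub, ← ContinuousLinearMap.mul_apply P P, hPP, sub_self]
  have hPexp : ∀ t : ℝ, P * exp (t • G) = exp (t • G) * P := by
    intro t
    have hcomm : Commute P (t • G) := by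
      show P * (t • G) = (t • G) * P
      rw [mul_smul_comm, smul_mul_assoc, hPG, hGP]
    exact (hcomm.exp_right).eq
  have hPx : ∀ t : ℝ, P (x t) = 0 := by
    intro t
    show P ((exp (t • G)) c₀) = 0
    rw [← ContinuousLinearMap.mul_apply, hPexp t, ContinuousLinearMap.mul_apply, hPc₀, map_zero]
  have hexpG : ∀ t : ℝ, exp (t • G) * G = G * exp (t • G) := fun t =>
    (((Commute.refl G).smul_right t).exp_right).eq.symm
  have hxderiv : ∀ t : ℝ, HasDerivAt x (G (x t)) t := by
    intro t
    have h1 : HasDerivAt (fun u : ℝ => rS (exp (u • G))) (rS (exp (t • G) * G)) t :=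
      rS.hasFDerivAt.comp_hasDerivAt t (hasDerivAt_exp_smul_const G t)
    have h2 := h1.clm_apply (hasDerivAt_const t c₀)
    simp only [map_zero, add_zero] at h2
    have h3 : (rS (exp (t • G) * G)) c₀ = G (x t) := by
      show (exp (t • G) * G) c₀ = G (x t)
      rw [hexpG t, ContinuousLinearMap.mul_apply]
    rw [h3] at h2
    exact h2
  have hexpcont : Continuous fun t : ℝ => exp (t • G) :=
    continuous_iff_continuousAt.mpr fun t => (hasDerivAt_exp_smul_const G t).continuousAt
  have hxcont : Continuous x := by
    have h1 : Continuous fun t : ℝ => (rS (exp (t • G))) c₀ :=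
      (rS.continuous.comp hexpcont).clm_apply continuous_const
    exact h1
  have hx0c : x 0 = c₀ := by
    show (exp ((0:ℝ) • G)) c₀ = c₀
    rw [zero_smul, exp_zero, ContinuousLinearMap.one_apply]
  have hEx : ∀ t : ℝ, 0 ≤ t → HasDerivWithinAt (fun τ => E (x τ)) (A (x t)) (Set.Ici 0) t := by
    intro t ht
    have h1 : HasDerivWithinAt x (G (x t)) (Set.Ici 0) t := (hxderiv t).hasDerivWithinAt
    have h2 : HasDerivWithinAt (fun τ => Eh (x τ)) (Eh (G (x t))) (Set.Ici 0) t :=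
      hcomp Eh x (G (x t)) t h1
    have h3 : Eh (G (x t)) = Ah (x t) := by
      rw [← ContinuousLinearMap.mul_apply, hEhG, ContinuousLinearMap.add_apply, hPx t, add_zero]
    rw [h3] at h2
    have h4 : HasDerivWithinAt (fun τ => (μ • E - A) (Eh (x τ))) ((μ • E - A) (Ah (x t)))
        (Set.Ici 0) t := hcomp (μ • E - A) _ _ t h2
    have h5 : ∀ v : X, (μ • E - A) (Eh v) = E v := by
      intro v
      rw [← ContinuousLinearMap.mul_apply, hEhdef, ← mul_assoc, hBr, one_mul]
    have h6 : (μ • E - A) (Ah (x t)) = A (x t) := by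
      rw [← ContinuousLinearMap.mul_apply, ← hBA, ← mul_assoc, hBr, one_mul]
    simp only [h5, h6] at h4
    exact h4
  have hx0E : E (x 0) = E x₀ := by
    rw [hx0c, hc₀def, map_sub, ← ContinuousLinearMap.mul_apply E P, hEP0]
    simp
  refine ⟨x, ⟨hxcont.continuousOn, hEx, hx0E⟩, ?_⟩
  -- uniqueness
  intro y hy t ht
  obtain ⟨hycont, hyderiv, hy0⟩ := hy
  have hU1 : ∀ τ : ℝ, 0 ≤ τ → HasDerivWithinAt (fun σ => Eh (y σ)) (Ah (y τ)) (Set.Ici 0) τ := by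
    intro τ hτ
    have h1 := hcomp B _ _ τ (hyderiv τ hτ)
    have h2 : B (A (y τ)) = Ah (y τ) := by rw [← ContinuousLinearMap.mul_apply, hBA]
    rw [h2] at h1
    have h3 : (fun σ => Eh (y σ)) = fun σ => B (E (y σ)) := by
      funext σ
      rw [hEhdef, ContinuousLinearMap.mul_apply]
    rw [h3]
    exact h1
  have hPy : ∀ τ : ℝ, 0 ≤ τ → P (y τ) = 0 := by
    intro τ hτ
    have h1 : HasDerivWithinAt (fun σ => P (Eh (y σ))) (P (Ah (y τ))) (Set.Ici 0) τ :=
      hcomp P _ _ τ (hU1 τ hτ)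
    have h2 : (fun σ => P (Eh (y σ))) = fun _ : ℝ => (0 : X) := by
      funext σ
      rw [← ContinuousLinearMap.mul_apply, hPEh, ContinuousLinearMap.zero_apply]
    rw [h2] at h1
    have h3 : HasDerivWithinAt (fun _ : ℝ => (0 : X)) (0 : X) (Set.Ici 0) τ :=
      hasDerivWithinAt_const _ _ _
    have hud : UniqueDiffWithinAt ℝ (Set.Ici (0:ℝ)) τ := uniqueDiffOn_Ici 0 τ hτ
    have h4 : P (Ah (y τ)) = 0 := (h1.derivWithin hud).symm.trans (h3.derivWithin hud)
    have h5 : P (Ah (y τ)) = -(P (y τ)) := by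
      rw [← ContinuousLinearMap.mul_apply, hPAh, ContinuousLinearMap.neg_apply]
    rw [h5] at h4
    exact neg_eq_zero.mp h4
  have hSEhv : ∀ v : X, P v = 0 → S (Eh v) = v := by
    intro v hv
    calc S (Eh v) = (S * Eh) v := (ContinuousLinearMap.mul_apply _ _ _).symm
      _ = v - P v := by rw [hSEh, ContinuousLinearMap.sub_apply, ContinuousLinearMap.one_apply]
      _ = v := by rw [hv, sub_zero]
  have hU3 : ∀ τ : ℝ, 0 ≤ τ → HasDerivWithinAt y (G (y τ)) (Set.Ici 0) τ := by
    intro τ hτ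
    have h1 : HasDerivWithinAt (fun σ => S (Eh (y σ))) (S (Ah (y τ))) (Set.Ici 0) τ :=
      hcomp S _ _ τ (hU1 τ hτ)
    have h2 : S (Ah (y τ)) = G (y τ) := by
      rw [← ContinuousLinearMap.mul_apply, ← hGdef]
    rw [h2] at h1
    refine h1.congr ?_ ?_
    · intro σ hσ
      exact (hSEhv (y σ) (hPy σ hσ)).symm
    · exact (hSEhv (y τ) (hPy τ hτ)).symm
  have hy0' : y 0 = c₀ := by
    have h1 : Eh (y 0) = Eh x₀ := by
      rw [hEhdef, ContinuousLinearMap.mul_apply, ContinuousLinearMap.mul_apply, hy0]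
    have h2 := hSEhv (y 0) (hPy 0 le_rfl)
    rw [← h2, h1]
    calc S (Eh x₀) = (S * Eh) x₀ := (ContinuousLinearMap.mul_apply _ _ _).symm
      _ = x₀ - P x₀ := by rw [hSEh, ContinuousLinearMap.sub_apply, ContinuousLinearMap.one_apply]
      _ = c₀ := by rw [hc₀def]
  -- the difference, transported by the backward flow, is constant
  set z : ℝ → X := fun τ => (exp ((-τ) • G)) (y τ - x τ) with hzdef
  have hexpd : ∀ τ : ℝ, HasDerivAt (fun σ : ℝ => exp ((-σ) • G))
      ((-1 : ℝ) • (exp ((-τ) • G) * G)) τ := by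
    intro τ
    have h1 := hasDerivAt_exp_smul_const G (-τ)
    have h2 : HasDerivAt (fun σ : ℝ => -σ) (-1) τ := (hasDerivAt_id τ).neg
    exact h1.scomp τ h2
  have hzderiv : ∀ τ : ℝ, 0 ≤ τ → HasDerivWithinAt z 0 (Set.Ici 0) τ := by
    intro τ hτ
    have hd : HasDerivWithinAt (fun σ => y σ - x σ) (G (y τ) - G (x τ)) (Set.Ici 0) τ :=
      (hU3 τ hτ).sub ((hxderiv τ).hasDerivWithinAt)
    have hc : HasDerivAt (fun σ : ℝ => rS (exp ((-σ) • G)))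
        (rS ((-1 : ℝ) • (exp ((-τ) • G) * G))) τ :=
      rS.hasFDerivAt.comp_hasDerivAt τ (hexpd τ)
    have h4 := hc.hasDerivWithinAt.clm_apply hd
    have h5 : (rS ((-1 : ℝ) • (exp ((-τ) • G) * G))) (y τ - x τ) +
        (rS (exp ((-τ) • G))) (G (y τ) - G (x τ)) = 0 := by
      show ((-1 : ℝ) • (exp ((-τ) • G) * G)) (y τ - x τ) +
        (exp ((-τ) • G)) (G (y τ) - G (x τ)) = 0
      have h6 : G (y τ) - G (x τ) = G (y τ - x τ) := (map_sub G _ _).symm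
      rw [h6, ← ContinuousLinearMap.mul_apply (exp ((-τ) • G)) G,
        ContinuousLinearMap.smul_apply, neg_one_smul, neg_add_cancel]
    rw [h5] at h4
    exact h4
  have hzcont : ContinuousOn z (Set.Ici (0:ℝ)) := by
    have hexpc : Continuous (fun σ : ℝ => rS (exp ((-σ) • G))) :=
      rS.continuous.comp (continuous_iff_continuousAt.mpr fun τ => (hexpd τ).continuousAt)
    exact hexpc.continuousOn.clm_apply (hycont.sub hxcont.continuousOn)
  have hz0 : z 0 = 0 := by
    show (exp ((-(0:ℝ)) • G)) (y 0 - x 0) = 0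
    rw [hy0', hx0c, sub_self, map_zero]
  have hzt : z t = 0 := by
    have := constant_of_has_deriv_right_zero (hzcont.mono Set.Icc_subset_Ici_self)
      (fun τ hτ => (hzderiv τ hτ.1).mono (Set.Ici_subset_Ici.mpr hτ.1)) t
      (Set.right_mem_Icc.mpr ht)
    rw [this, hz0]
  have hzt' : (exp ((-t) • G)) (y t - x t) = 0 := hzt
  have hinv : (exp (t • G)) ((exp ((-t) • G)) (y t - x t)) = y t - x t := by
    rw [← ContinuousLinearMap.mul_apply, ← exp_add_of_commute_of_mem_ball (𝕂 := ℂ)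
      (((Commute.refl G).smul_left t).smul_right (-t))
      ((expSeries_radius_eq_top ℂ (X →L[ℂ] X)).symm ▸ edist_lt_top _ _)
      ((expSeries_radius_eq_top ℂ (X →L[ℂ] X)).symm ▸ edist_lt_top _ _)]
    have h7 : t • G + (-t) • G = (0 : X →L[ℂ] X) := by
      rw [← add_smul]
      norm_num
    rw [h7, exp_zero, ContinuousLinearMap.one_apply]
  have h8 : y t - x t = 0 := by
    rw [← hinv, hzt', map_zero]
  have h9 := sub_eq_zero.mp h8
  exact h9
end

section
/- Let X be a complex Hilbert space, let T be a bounded quasi-nilpotent linear operator on X, let τ > 0 and y ∈ X. Then there exists x ∈ L²([0,τ]; X) and c ∈ X such that T x(t) = c + ∫_0^t x(s) ds for almost every t ∈ [0,τ] and ∫_0^τ x(s) ds = y (i.e., x solves (d/dt)(Tx) = x on [0,τ] with Tx(τ) − Tx(0) = y), if and only if ∑_{k ∈ ℤ} ‖(I − (2πik/τ) T)^{-1} y‖² < ∞. In this case x is unique and is given by the L²-convergent Fourier series x(t) = (1/τ) ∑_{k ∈ ℤ} (I − (2πik/τ) T)^{-1} y · e^{2πikt/τ}. -/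
open MeasureTheory

/-- The frequency `2πik/τ`. -/
noncomputable def freq (τ : ℝ) (k : ℤ) : ℂ := 2 * Real.pi * Complex.I * (k : ℂ) / (τ : ℂ)

/-- `x ∈ L²([0,τ]; X)` solves `(d/dt)(Tx) = x` on `[0,τ]` (in integrated form,
`Tx(t) = c + ∫_0^t x(s) ds` a.e.) with `Tx(τ) - Tx(0) = ∫_0^τ x(s) ds = y`. -/
def IsL2Sol {X : Type*} [NormedAddCommGroup X] [InnerProductSpace ℂ X] [CompleteSpace X]
    (T : X →L[ℂ] X) (τ : ℝ) (y : X) (x : ℝ → X) : Prop :=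
  MemLp x 2 (volume.restrict (Set.Ioc (0:ℝ) τ)) ∧
  (∃ c : X, ∀ᵐ t ∂(volume.restrict (Set.Ioc (0:ℝ) τ)),
      T (x t) = c + ∫ s in (0:ℝ)..t, x s) ∧
  (∫ s in (0:ℝ)..τ, x s) = y

namespace Stmt18Aux

open Complex Set

/-- pinv inverse property -/
theorem pinv_right {X : Type*} [NormedAddCommGroup X] [NormedSpace ℂ X] [CompleteSpace X]
    {B : X →L[ℂ] X} (h : Function.Bijective B) (v : X) : B (pinv B v) = v := by
  classical
  simp only [pinv, dif_pos h]
  exact ContinuousLinearEquiv.ofBijective_apply_symm_apply B _ _ v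

theorem eq_pinv_of {X : Type*} [NormedAddCommGroup X] [NormedSpace ℂ X] [CompleteSpace X]
    {B : X →L[ℂ] X} (h : Function.Bijective B) {u v : X} (hu : B u = v) : u = pinv B v :=
  h.1 (by rw [pinv_right h, hu])

theorem freq_zero {τ : ℝ} : freq τ 0 = 0 := by simp [freq]

theorem freq_neg {τ : ℝ} {k : ℤ} : -freq τ k = freq τ (-k) := by
  simp [freq]; ring

theorem freq_sub {τ : ℝ} {m k : ℤ} : freq τ m - freq τ k = freq τ (m - k) := by
  simp only [freq]; push_cast; ring

theorem freq_eq {τ : ℝ} {k : ℤ} : freq τ k = ((2 * Real.pi * k / τ : ℝ) : ℂ) * Complex.I := by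
  simp only [freq]; push_cast; ring

theorem freq_ne_zero {τ : ℝ} (hτ : 0 < τ) {k : ℤ} (hk : k ≠ 0) : freq τ k ≠ 0 := by
  have h2 : (2 * (Real.pi:ℂ) * Complex.I * (k:ℂ)) ≠ 0 :=
    mul_ne_zero (mul_ne_zero (mul_ne_zero two_ne_zero
      (Complex.ofReal_ne_zero.mpr Real.pi_ne_zero)) Complex.I_ne_zero)
      (Int.cast_ne_zero.mpr hk)
  exact div_ne_zero h2 (Complex.ofReal_ne_zero.mpr hτ.ne')

theorem exp_freq_mul_self {τ : ℝ} (hτ : τ ≠ 0) (k : ℤ) :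
    Complex.exp (freq τ k * τ) = 1 := by
  have hτ' : (τ:ℂ) ≠ 0 := Complex.ofReal_ne_zero.mpr hτ
  have : freq τ k * τ = (k : ℂ) * (2 * Real.pi * Complex.I) := by
    rw [freq]; field_simp
  rw [this, Complex.exp_int_mul_two_pi_mul_I]

theorem norm_exp_freq {τ : ℝ} (k : ℤ) (t : ℝ) : ‖Complex.exp (freq τ k * t)‖ = 1 := by
  rw [freq_eq]
  have : ((2 * Real.pi * k / τ : ℝ) : ℂ) * Complex.I * (t : ℂ)
      = ((2 * Real.pi * k / τ * t : ℝ) : ℂ) * Complex.I := by push_cast; ring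
  rw [this, Complex.norm_exp_ofReal_mul_I]

theorem conj_exp_freq {τ : ℝ} (k : ℤ) (t : ℝ) :
    (starRingEnd ℂ) (Complex.exp (freq τ k * t)) = Complex.exp (-(freq τ k) * t) := by
  rw [← Complex.exp_conj]
  congr 1
  rw [freq_eq]
  have h1 : ((2 * Real.pi * k / τ : ℝ) : ℂ) * Complex.I * (t : ℂ)
      = ((2 * Real.pi * k / τ * t : ℝ) : ℂ) * Complex.I := by push_cast; ring
  rw [h1, map_mul, Complex.conj_ofReal, Complex.conj_I]
  push_cast; ring

theorem integral_exp_freq {τ : ℝ} (hτ : 0 < τ) (k : ℤ) :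
    (∫ t in Ioc (0:ℝ) τ, Complex.exp (freq τ k * t)) = if k = 0 then (τ : ℂ) else 0 := by
  rw [← intervalIntegral.integral_of_le hτ.le]
  rcases eq_or_ne k 0 with rfl | hk
  · simp [freq_zero]
  · rw [if_neg hk, integral_exp_mul_complex (freq_ne_zero hτ hk)]
    rw [exp_freq_mul_self hτ.ne' k]
    simp


section Op
variable {X : Type*} [NormedAddCommGroup X] [NormedSpace ℂ X] [CompleteSpace X]

theorem bij_one_sub_smul {T : X →L[ℂ] X} (hqn : spectrum ℂ T = {0}) (lam : ℂ) :
    Function.Bijective ((1 - lam • T : X →L[ℂ] X)) := by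
  rcases eq_or_ne lam 0 with rfl | hl
  · simpa using Function.bijective_id
  · have hmem : lam⁻¹ ∉ spectrum ℂ T := by
      rw [hqn]; simpa using inv_ne_zero hl
    have hunit : IsUnit ((algebraMap ℂ (X →L[ℂ] X)) lam⁻¹ - T) :=
      spectrum.notMem_iff.mp hmem
    have hunit2 : IsUnit ((algebraMap ℂ (X →L[ℂ] X)) lam) := (IsUnit.mk0 lam hl).map _
    have key : 1 - lam • T
        = (algebraMap ℂ (X →L[ℂ] X)) lam * ((algebraMap ℂ (X →L[ℂ] X)) lam⁻¹ - T) := by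
      rw [mul_sub, ← map_mul, mul_inv_cancel₀ hl]
      simp [Algebra.algebraMap_eq_smul_one, smul_smul, ContinuousLinearMap.smul_comp]
    obtain ⟨u, hu⟩ := hunit2.mul hunit
    rw [← key] at hu
    constructor
    · intro a b hab
      have : (↑u⁻¹ * ↑u : X →L[ℂ] X) a = (↑u⁻¹ * ↑u : X →L[ℂ] X) b := by
        simp only [ContinuousLinearMap.mul_apply, hu, hab]
      simpa [u.inv_mul] using this
    · intro b
      refine ⟨(↑u⁻¹ : X →L[ℂ] X) b, ?_⟩
      have : (↑u * ↑u⁻¹ : X →L[ℂ] X) b = b := by simp [u.mul_inv]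
      simpa only [ContinuousLinearMap.mul_apply, hu] using this

end Op

section Meas

open MeasureTheory

variable {X : Type*} [NormedAddCommGroup X] [NormedSpace ℂ X]

instance instFinIoc (τ : ℝ) : IsFiniteMeasure (volume.restrict (Set.Ioc (0:ℝ) τ)) :=
  ⟨by rw [Measure.restrict_apply_univ]; exact measure_Ioc_lt_top⟩

theorem integrable_of_L2 {τ : ℝ} {f : ℝ → X}
    (hf : MemLp f 2 (volume.restrict (Set.Ioc (0:ℝ) τ))) :
    Integrable f (volume.restrict (Set.Ioc (0:ℝ) τ)) :=
  hf.integrable one_le_two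

theorem aesm_exp_smul {μ : Measure ℝ} (c : ℂ) {f : ℝ → X}
    (hf : AEStronglyMeasurable f μ) :
    AEStronglyMeasurable (fun t : ℝ => Complex.exp (c * t) • f t) μ :=
  ((Complex.continuous_exp.comp (continuous_const.mul Complex.continuous_ofReal))).aestronglyMeasurable.smul hf

theorem integrable_exp_smul {τ : ℝ} (c : ℂ) {f : ℝ → X}
    (hf : Integrable f (volume.restrict (Set.Ioc (0:ℝ) τ)))
    (hnorm : ∀ t : ℝ, ‖Complex.exp (c * t)‖ = 1) :
    Integrable (fun t : ℝ => Complex.exp (c * t) • f t) (volume.restrict (Set.Ioc (0:ℝ) τ)) := by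
  refine hf.mono (aesm_exp_smul c hf.aestronglyMeasurable) ?_
  filter_upwards with t
  rw [norm_smul, hnorm t, one_mul]

theorem memL2_exp_smul {τ : ℝ} (c : ℂ) {f : ℝ → X}
    (hf : MemLp f 2 (volume.restrict (Set.Ioc (0:ℝ) τ)))
    (hnorm : ∀ t : ℝ, ‖Complex.exp (c * t)‖ = 1) :
    MemLp (fun t : ℝ => Complex.exp (c * t) • f t) 2 (volume.restrict (Set.Ioc (0:ℝ) τ)) := by
  refine hf.of_le (aesm_exp_smul c hf.1) ?_
  filter_upwards with t
  rw [norm_smul, hnorm t, one_mul]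

end Meas


section CF

open MeasureTheory

variable {X : Type*} [NormedAddCommGroup X] [NormedSpace ℂ X] [CompleteSpace X]

/-- Unnormalized `k`-th Fourier coefficient on `(0, τ]`. -/
noncomputable def cf (τ : ℝ) (k : ℤ) (f : ℝ → X) : X :=
  ∫ t in Set.Ioc (0:ℝ) τ, Complex.exp (-(freq τ k) * t) • f t

theorem norm_exp_neg_freq {τ : ℝ} (k : ℤ) (t : ℝ) :
    ‖Complex.exp (-(freq τ k) * t)‖ = 1 := by
  rw [freq_neg]; exact norm_exp_freq _ _

theorem cf_congr {τ : ℝ} {k : ℤ} {f g : ℝ → X}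
    (h : f =ᵐ[volume.restrict (Set.Ioc (0:ℝ) τ)] g) : cf τ k f = cf τ k g := by
  refine integral_congr_ae (h.mono fun t ht => ?_)
  dsimp only; rw [ht]

theorem cf_sub {τ : ℝ} {k : ℤ} {f g : ℝ → X}
    (hf : Integrable f (volume.restrict (Set.Ioc (0:ℝ) τ)))
    (hg : Integrable g (volume.restrict (Set.Ioc (0:ℝ) τ))) :
    cf τ k (fun t => f t - g t) = cf τ k f - cf τ k g := by
  unfold cf
  rw [← integral_sub (integrable_exp_smul _ hf (norm_exp_neg_freq k))
    (integrable_exp_smul _ hg (norm_exp_neg_freq k))]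
  simp_rw [smul_sub]

theorem cf_add {τ : ℝ} {k : ℤ} {f g : ℝ → X}
    (hf : Integrable f (volume.restrict (Set.Ioc (0:ℝ) τ)))
    (hg : Integrable g (volume.restrict (Set.Ioc (0:ℝ) τ))) :
    cf τ k (fun t => f t + g t) = cf τ k f + cf τ k g := by
  unfold cf
  rw [← integral_add (integrable_exp_smul _ hf (norm_exp_neg_freq k))
    (integrable_exp_smul _ hg (norm_exp_neg_freq k))]
  simp_rw [smul_add]

theorem cf_zero_eq {τ : ℝ} {f : ℝ → X} :
    cf τ 0 f = ∫ t in Set.Ioc (0:ℝ) τ, f t := by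
  unfold cf
  simp [freq_zero]

theorem int_exp_neg_freq {τ : ℝ} (hτ : 0 < τ) {k : ℤ} (hk : k ≠ 0) :
    (∫ t in Set.Ioc (0:ℝ) τ, Complex.exp (-(freq τ k) * t)) = 0 := by
  simp_rw [freq_neg]
  rw [integral_exp_freq hτ]
  simp [hk]

theorem cf_clm {τ : ℝ} {k : ℤ} (T : X →L[ℂ] X) {f : ℝ → X}
    (hf : Integrable f (volume.restrict (Set.Ioc (0:ℝ) τ))) :
    cf τ k (fun t => T (f t)) = T (cf τ k f) := by
  unfold cf
  rw [← T.integral_comp_comm (integrable_exp_smul _ hf (norm_exp_neg_freq k))]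
  simp_rw [_root_.map_smul]

theorem cf_exp_smul {τ : ℝ} (hτ : 0 < τ) (k m : ℤ) (v : X) :
    cf τ k (fun t => Complex.exp (freq τ m * t) • v)
      = (if k = m then (τ : ℂ) else 0) • v := by
  unfold cf
  have h1 : ∀ t : ℝ, Complex.exp (-(freq τ k) * t) • Complex.exp (freq τ m * t) • v
      = Complex.exp (freq τ (m - k) * t) • v := by
    intro t
    rw [smul_smul, ← Complex.exp_add, ← freq_sub]
    ring_nf
  simp_rw [h1]
  rw [integral_smul_const, integral_exp_freq hτ]
  congr 1
  simp only [sub_eq_zero]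
  by_cases h : k = m <;> simp [h, eq_comm]

theorem cf_const {τ : ℝ} (hτ : 0 < τ) (k : ℤ) (v : X) :
    cf τ k (fun _ => v) = (if k = 0 then (τ : ℂ) else 0) • v := by
  have := cf_exp_smul (X := X) hτ k 0 v
  simp only [freq_zero, zero_mul, Complex.exp_zero, one_smul] at this
  exact this

end CF

section Cancel

open MeasureTheory

variable {X : Type*} [NormedAddCommGroup X] [InnerProductSpace ℂ X] [CompleteSpace X]

theorem scalar_cancel {τ : ℝ} (hτ : 0 < τ) {g : ℝ → ℂ}
    (hg : MemLp g 2 (volume.restrict (Set.Ioc (0:ℝ) τ)))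
    (h0 : ∀ n : ℤ, (∫ t in Set.Ioc (0:ℝ) τ, Complex.exp (-(freq τ n) * t) * g t) = 0) :
    g =ᵐ[volume.restrict (Set.Ioc (0:ℝ) τ)] 0 := by
  haveI : Fact (0 < τ) := ⟨hτ⟩
  set μ' : Measure ℝ := volume.restrict (Set.Ioc (0:ℝ) τ) with hμ'
  -- strongly measurable representative
  set g' : ℝ → ℂ := hg.1.mk g with hg'def
  have hg'm : StronglyMeasurable g' := hg.1.stronglyMeasurable_mk
  have hgg' : g =ᵐ[μ'] g' := hg.1.ae_eq_mk
  set G : AddCircle τ → ℂ := AddCircle.liftIoc τ 0 g' with hGdef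
  have hGm : Measurable G := by
    exact (hg'm.measurable.comp measurable_subtype_coe).comp
      (AddCircle.measurableEquivIoc τ 0).measurable
  have hIoc : Set.Ioc (0:ℝ) (0 + τ) = Set.Ioc (0:ℝ) τ := by rw [zero_add]
  have hcomp : ∀ t ∈ Set.Ioc (0:ℝ) τ, G (↑t) = g' t := by
    intro t ht
    exact AddCircle.liftIoc_coe_apply (by rwa [hIoc])
  have hmap : Measure.map ((↑) : ℝ → AddCircle τ) μ' = volume := by
    have := (AddCircle.measurePreserving_mk τ 0).map_eq
    rwa [hIoc] at this
  have hGcomp : (fun t => G (↑t)) =ᵐ[μ'] g' := by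
    filter_upwards [ae_restrict_mem measurableSet_Ioc] with t ht
    exact hcomp t ht
  have hGL2vol : MemLp G 2 (volume : Measure (AddCircle τ)) := by
    rw [← hmap]
    rw [memLp_map_measure_iff hGm.aestronglyMeasurable.aemeasurable.aestronglyMeasurable
      (AddCircle.measurable_mk').aemeasurable]
    exact (hg.ae_eq hgg').ae_eq hGcomp.symm
  have hGL2 : MemLp G 2 (AddCircle.haarAddCircle : Measure (AddCircle τ)) := by
    have h1 : (AddCircle.haarAddCircle : Measure (AddCircle τ))
        = (ENNReal.ofReal τ)⁻¹ • (volume : Measure (AddCircle τ)) := by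
      rw [AddCircle.volume_eq_smul_haarAddCircle, smul_smul,
        ENNReal.inv_mul_cancel (ENNReal.ofReal_pos.mpr hτ).ne' ENNReal.ofReal_ne_top, one_smul]
    rw [h1]
    exact hGL2vol.smul_measure (ENNReal.inv_ne_top.mpr (ENNReal.ofReal_pos.mpr hτ).ne')
  set F : Lp ℂ 2 (AddCircle.haarAddCircle : Measure (AddCircle τ)) := hGL2.toLp G with hFdef
  have hFG : ⇑F =ᵐ[(AddCircle.haarAddCircle : Measure (AddCircle τ))] G := hGL2.coeFn_toLp
  have hcoeffG : ∀ n : ℤ, fourierCoeff G n = 0 := by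
    intro n
    rw [fourierCoeff_eq_intervalIntegral G n 0]
    have h2 : ∫ x in (0:ℝ)..(0 + τ), (fourier (-n) (x : AddCircle τ) : ℂ) • G (x : AddCircle τ)
        = ∫ t in Set.Ioc (0:ℝ) τ, Complex.exp (-(freq τ n) * t) * g t := by
      rw [zero_add, intervalIntegral.integral_of_le hτ.le]
      refine integral_congr_ae ?_
      filter_upwards [ae_restrict_mem measurableSet_Ioc, hgg'] with t ht hgt
      rw [hcomp t ht, fourier_coe_apply, smul_eq_mul, hgt]
      have harg : 2 * ↑Real.pi * Complex.I * ((-n : ℤ) : ℂ) * (t : ℂ) / (τ : ℂ)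
          = -(freq τ n) * (t : ℂ) := by
        rw [freq]; push_cast; ring
      rw [harg]
    rw [h2, h0 n, smul_zero]
  have hcoeffF : ∀ n : ℤ, fourierCoeff (⇑F) n = 0 := by
    intro n
    rw [← hcoeffG n]
    exact integral_congr_ae (hFG.mono fun x hx => by dsimp only; rw [hx])
  have hF0 : F = 0 := by
    have hrepr : (fourierBasis (T := τ)).repr F = 0 := by
      ext n
      rw [fourierBasis_repr]
      simpa using hcoeffF n
    have := congrArg (fourierBasis (T := τ)).repr.symm hrepr
    simpa using this
  have hG0 : G =ᵐ[(volume : Measure (AddCircle τ))] 0 := by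
    have h1 : G =ᵐ[(AddCircle.haarAddCircle : Measure (AddCircle τ))] 0 := by
      refine hFG.symm.trans ?_
      rw [hF0]
      exact Lp.coeFn_zero _ _ _
    rw [AddCircle.volume_eq_smul_haarAddCircle]
    exact Measure.ae_smul_measure h1 _
  have hpull : (fun t : ℝ => G (↑t)) =ᵐ[μ'] 0 := by
    rw [← hmap] at hG0
    exact (ae_map_iff (AddCircle.measurable_mk').aemeasurable
      (measurableSet_eq_fun hGm measurable_const)).mp hG0
  exact hgg'.trans (hGcomp.symm.trans hpull)

theorem vec_cancel {τ : ℝ} (hτ : 0 < τ) {f : ℝ → X}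
    (hf : MemLp f 2 (volume.restrict (Set.Ioc (0:ℝ) τ)))
    (h0 : ∀ n : ℤ, cf τ n f = 0) :
    f =ᵐ[volume.restrict (Set.Ioc (0:ℝ) τ)] 0 := by
  set μ' : Measure ℝ := volume.restrict (Set.Ioc (0:ℝ) τ) with hμ'
  set f' : ℝ → X := hf.1.mk f with hf'def
  have hf'm : StronglyMeasurable f' := hf.1.stronglyMeasurable_mk
  have hff' : f =ᵐ[μ'] f' := hf.1.ae_eq_mk
  have hf'L2 : MemLp f' 2 μ' := hf.ae_eq hff'
  have hint : Integrable f μ' := integrable_of_L2 hf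
  -- inner products with fixed vectors vanish a.e.
  have key : ∀ v : X, (fun t => (inner ℂ v (f' t) : ℂ)) =ᵐ[μ'] 0 := by
    intro v
    have h2 : (fun t => (inner ℂ v (f t) : ℂ)) =ᵐ[μ'] (fun t => (inner ℂ v (f' t) : ℂ)) :=
      hff'.mono fun t ht => by dsimp only; rw [ht]
    refine h2.symm.trans (scalar_cancel hτ (hf.const_inner v) ?_)
    intro n
    have h1 : ∫ t in Set.Ioc (0:ℝ) τ, Complex.exp (-(freq τ n) * t) * (inner ℂ v (f t) : ℂ)
        = (inner ℂ v (cf τ n f) : ℂ) := by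
      unfold cf
      rw [← integral_inner (integrable_exp_smul _ hint (norm_exp_neg_freq n))]
      simp_rw [inner_smul_right]
    rw [h1, h0 n, inner_zero_right]
  -- separability
  obtain ⟨c, hc_count, hc_sub⟩ := hf'm.isSeparable_range
  have hae : ∀ᵐ t ∂μ', ∀ v ∈ c, (inner ℂ v (f' t) : ℂ) = 0 := by
    rw [MeasureTheory.ae_ball_iff hc_count]
    intro v _
    exact key v
  have hzero : ∀ᵐ t ∂μ', f' t = 0 := by
    filter_upwards [hae] with t ht
    have hcont : Continuous fun w : X => (inner ℂ w (f' t) : ℂ) :=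
      continuous_id.inner continuous_const
    have hclosed : IsClosed {w : X | (inner ℂ w (f' t) : ℂ) = 0} :=
      isClosed_eq hcont continuous_const
    have hsub : closure c ⊆ {w : X | (inner ℂ w (f' t) : ℂ) = 0} :=
      closure_minimal (fun w hw => ht w hw) hclosed
    have hft : (inner ℂ (f' t) (f' t) : ℂ) = 0 := hsub (hc_sub (Set.mem_range_self t))
    exact inner_self_eq_zero.mp hft
  refine hff'.trans ?_
  filter_upwards [hzero] with t ht
  exact ht

end Cancel


section Hilbert

open MeasureTheory

variable {X : Type*} [NormedAddCommGroup X] [InnerProductSpace ℂ X] [CompleteSpace X]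

local notation "⟪" x ", " y "⟫" => @inner ℂ _ _ x y

/-- The exponential function `t ↦ e^{2πikt/τ} v`. -/
noncomputable def efun (τ : ℝ) (k : ℤ) (v : X) : ℝ → X :=
  fun t => Complex.exp (freq τ k * t) • v

theorem memL2_efun (τ : ℝ) (k : ℤ) (v : X) :
    MemLp (efun τ k v) 2 (volume.restrict (Set.Ioc (0:ℝ) τ)) :=
  memL2_exp_smul _ (memLp_const v) (norm_exp_freq k)

/-- Normalizing complex scalar. -/
noncomputable def sq' (τ : ℝ) : ℂ := ((Real.sqrt τ : ℝ) : ℂ)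

theorem sq'_ne_zero {τ : ℝ} (hτ : 0 < τ) : sq' τ ≠ 0 :=
  Complex.ofReal_ne_zero.mpr (Real.sqrt_ne_zero'.mpr hτ)

theorem sq'_mul_self {τ : ℝ} (hτ : 0 < τ) : sq' τ * sq' τ = (τ : ℂ) := by
  rw [sq']
  norm_cast
  exact Real.mul_self_sqrt hτ.le

theorem sq'_inv_mul {τ : ℝ} (hτ : 0 < τ) : (sq' τ)⁻¹ * (τ:ℂ) * (sq' τ)⁻¹ = 1 := by
  have h := sq'_ne_zero hτ
  rw [← sq'_mul_self hτ]
  field_simp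

/-- The linear map `v ↦ e^{2πik·/τ} (√τ)⁻¹ v` into `L²`. -/
noncomputable def Vmap (τ : ℝ) (k : ℤ) :
    X →ₗ[ℂ] Lp X 2 (volume.restrict (Set.Ioc (0:ℝ) τ)) where
  toFun v := (memL2_efun τ k ((sq' τ)⁻¹ • v)).toLp _
  map_add' u v := by
    rw [← MemLp.toLp_add, MemLp.toLp_eq_toLp_iff]
    apply Filter.EventuallyEq.of_eq
    funext t
    simp [efun, smul_add]
  map_smul' a v := by
    rw [← MemLp.toLp_const_smul, MemLp.toLp_eq_toLp_iff]
    apply Filter.EventuallyEq.of_eq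
    funext t
    simp only [efun, RingHom.id_apply, Pi.smul_apply]
    rw [smul_comm ((sq' τ)⁻¹) a, smul_comm]

theorem coeFn_Vmap (τ : ℝ) (k : ℤ) (v : X) :
    ⇑(Vmap τ k v) =ᵐ[volume.restrict (Set.Ioc (0:ℝ) τ)] efun τ k ((sq' τ)⁻¹ • v) :=
  (memL2_efun τ k ((sq' τ)⁻¹ • v)).coeFn_toLp

theorem cf_of_Vmap {τ : ℝ} (hτ : 0 < τ) (k m : ℤ) (v : X) :
    cf τ k ⇑(Vmap τ m v) = (if k = m then (τ:ℂ) else 0) • (sq' τ)⁻¹ • v := by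
  rw [cf_congr (coeFn_Vmap τ m v)]
  exact cf_exp_smul hτ k m _

theorem inner_Vmap {τ : ℝ} (k : ℤ) (v : X)
    (F : Lp X 2 (volume.restrict (Set.Ioc (0:ℝ) τ))) :
    ⟪Vmap τ k v, F⟫ = (sq' τ)⁻¹ * ⟪v, cf τ k ⇑F⟫ := by
  have hFi : Integrable (⇑F) (volume.restrict (Set.Ioc (0:ℝ) τ)) :=
    integrable_of_L2 (Lp.memLp F)
  rw [MeasureTheory.L2.inner_def]
  have h1 : ∀ᵐ t ∂(volume.restrict (Set.Ioc (0:ℝ) τ)),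
      ⟪(Vmap τ k v : ℝ → X) t, F t⟫
        = (sq' τ)⁻¹ * (Complex.exp (-(freq τ k) * t) * ⟪v, F t⟫) := by
    filter_upwards [coeFn_Vmap τ k v] with t ht
    rw [ht]
    simp only [efun]
    rw [inner_smul_left, inner_smul_left, conj_exp_freq]
    rw [map_inv₀]
    have : (starRingEnd ℂ) (sq' τ) = sq' τ := by
      rw [sq', Complex.conj_ofReal]
    rw [this]
    ring
  rw [integral_congr_ae h1, integral_const_mul]
  congr 1
  rw [cf, ← integral_inner (integrable_exp_smul _ hFi (norm_exp_neg_freq k))]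
  simp_rw [inner_smul_right]

/-- The isometric embedding of `X` into `L²` along the `k`-th exponential. -/
noncomputable def Viso {τ : ℝ} (hτ : 0 < τ) (k : ℤ) :
    X →ₗᵢ[ℂ] Lp X 2 (volume.restrict (Set.Ioc (0:ℝ) τ)) :=
  (Vmap τ k).isometryOfInner (by
    intro v w
    rw [inner_Vmap, cf_of_Vmap hτ k k, if_pos rfl, inner_smul_right, inner_smul_right,
      ← mul_assoc, ← mul_assoc, sq'_inv_mul hτ, one_mul])

theorem coeFn_Viso {τ : ℝ} (hτ : 0 < τ) (k : ℤ) (v : X) :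
    ⇑(Viso hτ k v) =ᵐ[volume.restrict (Set.Ioc (0:ℝ) τ)] efun τ k ((sq' τ)⁻¹ • v) :=
  coeFn_Vmap τ k v

theorem inner_Viso {τ : ℝ} (hτ : 0 < τ) (k : ℤ) (v : X)
    (F : Lp X 2 (volume.restrict (Set.Ioc (0:ℝ) τ))) :
    ⟪Viso hτ k v, F⟫ = (sq' τ)⁻¹ * ⟪v, cf τ k ⇑F⟫ :=
  inner_Vmap k v F

theorem inner_Viso_Viso {τ : ℝ} (hτ : 0 < τ) (k m : ℤ) (v w : X) :
    ⟪Viso hτ k v, Viso hτ m w⟫ = if k = m then ⟪v, w⟫ else 0 := by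
  rcases eq_or_ne k m with rfl | h
  · rw [if_pos rfl, inner_Viso hτ, show ⇑(Viso hτ k w) = ⇑(Vmap τ k w) from rfl,
      cf_of_Vmap hτ k k, if_pos rfl, inner_smul_right, inner_smul_right,
      ← mul_assoc, ← mul_assoc, sq'_inv_mul hτ, one_mul]
  · rw [if_neg h, inner_Viso hτ, show ⇑(Viso hτ m w) = ⇑(Vmap τ m w) from rfl,
      cf_of_Vmap hτ k m, if_neg h, zero_smul, inner_zero_right, mul_zero]

theorem orthV {τ : ℝ} (hτ : 0 < τ) :
    OrthogonalFamily ℂ (fun _ : ℤ => X) (fun k => Viso hτ k) := by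
  intro k m hkm v w
  rw [inner_Viso_Viso hτ, if_neg hkm]

theorem bessel {τ : ℝ} (hτ : 0 < τ) (F : Lp X 2 (volume.restrict (Set.Ioc (0:ℝ) τ))) :
    Summable (fun k : ℤ => ‖cf τ k ⇑F‖ ^ 2) := by
  classical
  set b : ℤ → X := fun k => (sq' τ)⁻¹ • cf τ k ⇑F with hb
  have hnb : ∀ k, ‖b k‖ ^ 2 = (Real.sqrt τ)⁻¹ ^ 2 * ‖cf τ k ⇑F‖ ^ 2 := by
    intro k
    rw [hb]
    simp only [norm_smul, mul_pow]
    congr 2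
    rw [norm_inv, sq', Complex.norm_real, Real.norm_eq_abs,
      _root_.abs_of_nonneg (Real.sqrt_nonneg τ)]
  have hkey : ∀ s : Finset ℤ, (∑ k ∈ s, ‖b k‖ ^ 2) ≤ ‖F‖ ^ 2 := by
    intro s
    have hP : ‖(∑ k ∈ s, Viso hτ k (b k))‖ ^ 2 = ∑ k ∈ s, ‖b k‖ ^ 2 :=
      (orthV hτ).norm_sum _ s
    have hinner : ⟪F, ∑ k ∈ s, Viso hτ k (b k)⟫ = (∑ k ∈ s, (‖b k‖:ℂ) ^ 2) := by
      rw [inner_sum]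
      refine Finset.sum_congr rfl fun k _ => ?_
      rw [← inner_conj_symm, inner_Viso hτ]
      have : cf τ k ⇑F = sq' τ • b k := by
        rw [hb]
        simp only [smul_smul]
        rw [mul_inv_cancel₀ (sq'_ne_zero hτ), one_smul]
      rw [this, inner_smul_right, ← mul_assoc, inv_mul_cancel₀ (sq'_ne_zero hτ), one_mul]
      rw [inner_self_eq_norm_sq_to_K]
      simp
    have h0 : (0:ℝ) ≤ ‖F - ∑ k ∈ s, Viso hτ k (b k)‖ ^ 2 := sq_nonneg _
    rw [@norm_sub_sq ℂ] at h0
    rw [hinner] at h0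
    rw [hP] at h0
    have hre : RCLike.re (∑ k ∈ s, ((‖b k‖ : ℂ)) ^ 2) = ∑ k ∈ s, ‖b k‖ ^ 2 := by
      rw [map_sum]
      refine Finset.sum_congr rfl fun k _ => ?_
      rw [show ((‖b k‖ : ℂ)) ^ 2 = ((‖b k‖ ^ 2 : ℝ) : ℂ) by push_cast; ring]
      exact Complex.ofReal_re _
    rw [hre] at h0
    linarith
  have hsum : Summable fun k => ‖b k‖ ^ 2 :=
    summable_of_sum_le (fun k => sq_nonneg _) hkey
  have : (fun k : ℤ => ‖cf τ k ⇑F‖ ^ 2) = fun k => ((Real.sqrt τ)⁻¹ ^ 2)⁻¹ * ‖b k‖ ^ 2 := by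
    funext k
    rw [hnb k]
    have hs : (Real.sqrt τ)⁻¹ ^ 2 ≠ 0 :=
      pow_ne_zero _ (inv_ne_zero (Real.sqrt_ne_zero'.mpr hτ))
    field_simp
  rw [this]
  exact hsum.mul_left _

theorem norm_sq_eq_integral {τ : ℝ} (F : Lp X 2 (volume.restrict (Set.Ioc (0:ℝ) τ))) :
    ‖F‖ ^ 2 = ∫ t in Set.Ioc (0:ℝ) τ, ‖F t‖ ^ 2 := by
  rw [norm_sq_eq_re_inner (𝕜 := ℂ) F, MeasureTheory.L2.inner_def,
    ← integral_re (L2.integrable_inner F F)]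
  refine integral_congr_ae (Filter.Eventually.of_forall fun t => ?_)
  exact (norm_sq_eq_re_inner (𝕜 := ℂ) (F t)).symm

theorem coeFn_finsetSum {τ : ℝ} (s : Finset ℤ)
    (f : ℤ → Lp X 2 (volume.restrict (Set.Ioc (0:ℝ) τ))) :
    ⇑(∑ k ∈ s, f k) =ᵐ[volume.restrict (Set.Ioc (0:ℝ) τ)]
      (fun t => ∑ k ∈ s, (f k : ℝ → X) t) := by
  classical
  induction s using Finset.induction_on with
  | empty =>
    simp only [Finset.sum_empty]
    exact Lp.coeFn_zero X 2 _
  | insert a s' hk ih =>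
    rw [Finset.sum_insert hk]
    refine (Lp.coeFn_add _ _).trans ?_
    filter_upwards [ih] with t ht
    simp only [Pi.add_apply, ht, Finset.sum_insert hk]

theorem hasSum_Viso {τ : ℝ} (hτ : 0 < τ) (w : ℤ → X)
    (hw : Summable fun k => ‖w k‖ ^ 2) :
    ∃ G : Lp X 2 (volume.restrict (Set.Ioc (0:ℝ) τ)),
      HasSum (fun k => Viso hτ k (w k)) G ∧ ∀ k, cf τ k ⇑G = sq' τ • w k := by
  have hsum : Summable (fun k => Viso hτ k (w k)) :=
    ((orthV hτ).summable_iff_norm_sq_summable w).mpr hw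
  obtain ⟨G, hG⟩ := hsum
  refine ⟨G, hG, fun k => ?_⟩
  refine ext_inner_left ℂ fun v => ?_
  have h1 : ⟪Viso hτ k v, G⟫ = ⟪v, w k⟫ := by
    have h2 : HasSum (fun m => ⟪Viso hτ k v, Viso hτ m (w m)⟫) ⟪Viso hτ k v, G⟫ :=
      hG.mapL (innerSL ℂ (Viso hτ k v))
    have h3 : (fun m => ⟪Viso hτ k v, Viso hτ m (w m)⟫)
        = fun m => if m = k then ⟪v, w k⟫ else 0 := by
      funext m
      rw [inner_Viso_Viso hτ]
      rcases eq_or_ne k m with rfl | h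
      · simp
      · simp [h, Ne.symm h]
    rw [h3] at h2
    exact h2.unique (hasSum_ite_eq k _)
  have h4 := inner_Viso hτ k v G
  rw [h1] at h4
  rw [inner_smul_right]
  have h5 : ⟪v, cf τ k ⇑G⟫ = sq' τ * ⟪v, w k⟫ := by
    have := congrArg (fun z => sq' τ * z) h4
    rw [← mul_assoc, mul_inv_cancel₀ (sq'_ne_zero hτ), one_mul] at this
    exact this.symm
  exact h5

end Hilbert


section Primitive

open MeasureTheory

variable {X : Type*} [NormedAddCommGroup X] [NormedSpace ℂ X] [CompleteSpace X]

theorem Iic_inter_Ioc {τ t : ℝ} (ht : t ∈ Set.Ioc (0:ℝ) τ) :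
    Set.Iic t ∩ Set.Ioc (0:ℝ) τ = Set.Ioc (0:ℝ) t := by
  ext s
  simp only [Set.mem_inter_iff, Set.mem_Iic, Set.mem_Ioc]
  exact ⟨fun ⟨h1, h2, _⟩ => ⟨h2, h1⟩, fun ⟨h1, h2⟩ => ⟨h2, h1, h2.trans ht.2⟩⟩

theorem Ici_inter_Ioc {τ s : ℝ} (hs : s ∈ Set.Ioc (0:ℝ) τ) :
    Set.Ici s ∩ Set.Ioc (0:ℝ) τ = Set.Icc s τ := by
  ext u
  simp only [Set.mem_inter_iff, Set.mem_Ici, Set.mem_Ioc, Set.mem_Icc]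
  exact ⟨fun ⟨h1, _, h3⟩ => ⟨h1, h3⟩, fun ⟨h1, h2⟩ => ⟨h1, hs.1.trans_le h1, h2⟩⟩

theorem memL2_primitive {τ : ℝ} (hτ : 0 < τ) {x : ℝ → X}
    (hx : MemLp x 2 (volume.restrict (Set.Ioc (0:ℝ) τ))) :
    MemLp (fun t => ∫ s in (0:ℝ)..t, x s) 2 (volume.restrict (Set.Ioc (0:ℝ) τ)) := by
  have hxi : Integrable x (volume.restrict (Set.Ioc (0:ℝ) τ)) := integrable_of_L2 hx
  have hxIoc : IntegrableOn x (Set.Ioc (0:ℝ) τ) volume := hxi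
  have hxIcc : IntegrableOn x (Set.Icc (0:ℝ) τ) volume := by
    rwa [integrableOn_Icc_iff_integrableOn_Ioc]
  have hcont : ContinuousOn (fun t => ∫ s in Set.Ioc (0:ℝ) t, x s) (Set.Icc (0:ℝ) τ) :=
    intervalIntegral.continuousOn_primitive hxIcc
  have haesm : AEStronglyMeasurable (fun t => ∫ s in (0:ℝ)..t, x s)
      (volume.restrict (Set.Ioc (0:ℝ) τ)) := by
    have h1 : AEStronglyMeasurable (fun t => ∫ s in Set.Ioc (0:ℝ) t, x s)
        (volume.restrict (Set.Ioc (0:ℝ) τ)) :=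
      (hcont.mono Set.Ioc_subset_Icc_self).aestronglyMeasurable measurableSet_Ioc
    refine h1.congr ?_
    filter_upwards [ae_restrict_mem measurableSet_Ioc] with t ht
    rw [intervalIntegral.integral_of_le ht.1.le]
  refine MemLp.of_bound haesm (∫ s in Set.Ioc (0:ℝ) τ, ‖x s‖) ?_
  filter_upwards [ae_restrict_mem measurableSet_Ioc] with t ht
  rw [intervalIntegral.integral_of_le ht.1.le]
  refine (norm_integral_le_integral_norm _).trans ?_
  refine setIntegral_mono_set hxi.norm ?_ ?_
  · filter_upwards with s using norm_nonneg _
  · filter_upwards with s hs using ⟨hs.1, hs.2.trans ht.2⟩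

theorem cf_primitive {τ : ℝ} (hτ : 0 < τ) {x : ℝ → X}
    (hx : MemLp x 2 (volume.restrict (Set.Ioc (0:ℝ) τ))) {k : ℤ} (hk : k ≠ 0) :
    (∫ t in Set.Ioc (0:ℝ) τ, Complex.exp (-(freq τ k) * t) • (∫ s in (0:ℝ)..t, x s))
      = (freq τ k)⁻¹ • (cf τ k x - ∫ s in Set.Ioc (0:ℝ) τ, x s) := by
  classical
  set μ' : Measure ℝ := volume.restrict (Set.Ioc (0:ℝ) τ) with hμ'
  have hxi : Integrable x μ' := integrable_of_L2 hx
  set F : ℝ → ℝ → X := fun t s =>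
    if s ≤ t then Complex.exp (-(freq τ k) * t) • x s else 0 with hF
  have hSmeas : MeasurableSet {p : ℝ × ℝ | p.2 ≤ p.1} :=
    measurableSet_le measurable_snd measurable_fst
  have huncurry : Function.uncurry F
      = Set.indicator {p : ℝ × ℝ | p.2 ≤ p.1}
          (fun p => Complex.exp (-(freq τ k) * p.1) • x p.2) := by
    funext p
    rcases p with ⟨t, s⟩
    simp only [Function.uncurry, hF, Set.indicator, Set.mem_setOf_eq]
  have haesm : AEStronglyMeasurable (Function.uncurry F) (μ'.prod μ') := by
    rw [huncurry]
    refine AEStronglyMeasurable.indicator ?_ hSmeas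
    exact ((Complex.continuous_exp.comp (continuous_const.mul
      (Complex.continuous_ofReal.comp continuous_fst))).aestronglyMeasurable).smul hx.1.comp_snd
  have hsnd : Integrable (fun p : ℝ × ℝ => x p.2) (μ'.prod μ') := by
    rw [integrable_prod_iff hx.1.comp_snd]
    constructor
    · filter_upwards with t using hxi
    · exact integrable_const (μ := μ') (∫ s, ‖x s‖ ∂μ')
  have hFint : Integrable (Function.uncurry F) (μ'.prod μ') := by
    refine hsnd.norm.mono' haesm ?_
    filter_upwards with p
    obtain ⟨t, s⟩ := p
    show ‖F t s‖ ≤ ‖x s‖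
    simp only [hF]
    split_ifs with h
    · rw [norm_smul, norm_exp_neg_freq, one_mul]
    · simp
  have hslice : ∀ᵐ (t : ℝ) ∂μ',
      Complex.exp (-(freq τ k) * t) • (∫ s in (0:ℝ)..t, x s) = ∫ s, F t s ∂μ' := by
    filter_upwards [ae_restrict_mem measurableSet_Ioc] with t ht
    have h1 : (fun s => F t s)
        = (Set.Iic t).indicator (fun s => Complex.exp (-(freq τ k) * t) • x s) := by
      funext s
      simp only [hF, Set.indicator, Set.mem_Iic]
    rw [h1, integral_indicator measurableSet_Iic, Measure.restrict_restrict measurableSet_Iic,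
      Iic_inter_Ioc ht, intervalIntegral.integral_of_le ht.1.le, integral_smul]
  have hswap : ∫ t, (∫ s, F t s ∂μ') ∂μ' = ∫ s, (∫ t, F t s ∂μ') ∂μ' :=
    integral_integral_swap hFint
  have hinner : ∀ᵐ (s : ℝ) ∂μ',
      (∫ t, F t s ∂μ') = (freq τ k)⁻¹ • (Complex.exp (-(freq τ k) * s) • x s - x s) := by
    filter_upwards [ae_restrict_mem measurableSet_Ioc] with s hs
    have h1 : (fun t => F t s)
        = (Set.Ici s).indicator (fun t => Complex.exp (-(freq τ k) * t) • x s) := by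
      funext t
      simp only [hF, Set.indicator, Set.mem_Ici]
    rw [h1, integral_indicator measurableSet_Ici, Measure.restrict_restrict measurableSet_Ici,
      Ici_inter_Ioc hs]
    rw [integral_smul_const]
    rw [integral_Icc_eq_integral_Ioc, ← intervalIntegral.integral_of_le hs.2]
    rw [integral_exp_mul_complex (by rw [freq_neg]; exact freq_ne_zero hτ (neg_ne_zero.mpr hk))]
    have h2 : Complex.exp (-(freq τ k) * τ) = 1 := by
      rw [freq_neg]; exact exp_freq_mul_self hτ.ne' (-k)
    rw [h2]
    rw [smul_sub, smul_smul, ← sub_smul]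
    congr 1
    rw [div_neg, ← neg_div, neg_sub, sub_div, div_eq_inv_mul, one_div]
  calc (∫ t in Set.Ioc (0:ℝ) τ, Complex.exp (-(freq τ k) * t) • (∫ s in (0:ℝ)..t, x s))
      = ∫ t, (∫ s, F t s ∂μ') ∂μ' := integral_congr_ae hslice
    _ = ∫ s, (∫ t, F t s ∂μ') ∂μ' := hswap
    _ = ∫ s, (freq τ k)⁻¹ • (Complex.exp (-(freq τ k) * s) • x s - x s) ∂μ' :=
        integral_congr_ae hinner
    _ = (freq τ k)⁻¹ • (cf τ k x - ∫ s in Set.Ioc (0:ℝ) τ, x s) := by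
        rw [integral_smul, integral_sub (integrable_exp_smul _ hxi (norm_exp_neg_freq k)) hxi]
        rfl

end Primitive

section Main

open MeasureTheory Set

variable {X : Type*} [NormedAddCommGroup X] [InnerProductSpace ℂ X] [CompleteSpace X]
variable {T : X →L[ℂ] X} {τ : ℝ} {y : X}

/-- The candidate Fourier coefficients. -/
noncomputable def bvec (T : X →L[ℂ] X) (τ : ℝ) (y : X) (k : ℤ) : X :=
  pinv (1 - freq τ k • T) y

theorem bvec_spec (hqn : spectrum ℂ T = {0}) (k : ℤ) :
    (1 - freq τ k • T) (bvec T τ y k) = y :=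
  pinv_right (bij_one_sub_smul hqn _) y

theorem bvec_zero (hqn : spectrum ℂ T = {0}) : bvec T τ y 0 = y := by
  refine ((eq_pinv_of (bij_one_sub_smul hqn (freq τ 0)) ?_)).symm
  rw [freq_zero, zero_smul, sub_zero, ContinuousLinearMap.one_apply]

theorem T_bvec (hqn : spectrum ℂ T = {0}) (hτ : 0 < τ) {k : ℤ} (hk : k ≠ 0) :
    T (bvec T τ y k) = (freq τ k)⁻¹ • (bvec T τ y k - y) := by
  set b := bvec T τ y k with hb
  have h := bvec_spec (y := y) (τ := τ) hqn k
  rw [← hb] at h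
  simp only [ContinuousLinearMap.sub_apply, ContinuousLinearMap.one_apply,
    ContinuousLinearMap.smul_apply] at h
  have h2 : freq τ k • T b = b - y := by
    rw [← h]; abel
  rw [← h2, smul_smul, inv_mul_cancel₀ (freq_ne_zero hτ hk), one_smul]

theorem sol_cf (hqn : spectrum ℂ T = {0}) (hτ : 0 < τ) {x : ℝ → X}
    (hs : IsL2Sol T τ y x) (k : ℤ) : cf τ k x = bvec T τ y k := by
  have hxi : Integrable x (volume.restrict (Set.Ioc (0:ℝ) τ)) := integrable_of_L2 hs.1
  have hy : (∫ s in Set.Ioc (0:ℝ) τ, x s) = y := by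
    rw [← intervalIntegral.integral_of_le hτ.le]; exact hs.2.2
  rcases eq_or_ne k 0 with rfl | hk
  · rw [cf_zero_eq, hy, bvec_zero hqn]
  · refine eq_pinv_of (bij_one_sub_smul hqn _) ?_
    obtain ⟨c, hc⟩ := hs.2.1
    have hP : MemLp (fun t => ∫ s in (0:ℝ)..t, x s) 2 (volume.restrict (Set.Ioc (0:ℝ) τ)) :=
      memL2_primitive hτ hs.1
    have hTc : T (cf τ k x) = (freq τ k)⁻¹ • (cf τ k x - y) := by
      rw [← cf_clm T hxi]
      rw [cf_congr (f := fun t => T (x t)) (g := fun t => c + ∫ s in (0:ℝ)..t, x s) hc]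
      rw [cf_add (integrable_const c) (integrable_of_L2 hP)]
      have h1 : cf τ k (fun _ => c) = 0 := by
        rw [cf_const hτ, if_neg hk, zero_smul]
      rw [h1, zero_add, cf, cf_primitive hτ hs.1 hk, hy]
    have : (1 - freq τ k • T) (cf τ k x)
        = cf τ k x - freq τ k • T (cf τ k x) := by
      simp [ContinuousLinearMap.sub_apply, ContinuousLinearMap.smul_apply]
    rw [this, hTc, smul_smul, mul_inv_cancel₀ (freq_ne_zero hτ hk), one_smul, sub_sub_cancel]

theorem forward_summable (hqn : spectrum ℂ T = {0}) (hτ : 0 < τ) {x : ℝ → X}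
    (hs : IsL2Sol T τ y x) : Summable fun k : ℤ => ‖bvec T τ y k‖ ^ 2 := by
  have hb := bessel hτ (hs.1.toLp x)
  have he : (fun k : ℤ => ‖cf τ k ⇑(hs.1.toLp x)‖ ^ 2)
      = fun k => ‖bvec T τ y k‖ ^ 2 := by
    funext k
    rw [cf_congr (hs.1.coeFn_toLp), sol_cf hqn hτ hs]
  rwa [he] at hb

theorem unique_sol (hqn : spectrum ℂ T = {0}) (hτ : 0 < τ) {x x' : ℝ → X}
    (hs : IsL2Sol T τ y x) (hs' : IsL2Sol T τ y x') :
    x =ᵐ[volume.restrict (Set.Ioc (0:ℝ) τ)] x' := by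
  have hsub : MemLp (fun t => x t - x' t) 2 (volume.restrict (Set.Ioc (0:ℝ) τ)) :=
    hs.1.sub hs'.1
  have h0 : ∀ n : ℤ, cf τ n (fun t => x t - x' t) = 0 := by
    intro n
    rw [cf_sub (integrable_of_L2 hs.1) (integrable_of_L2 hs'.1),
      sol_cf hqn hτ hs, sol_cf hqn hτ hs', sub_self]
  have := vec_cancel hτ hsub h0
  filter_upwards [this] with t ht
  exact sub_eq_zero.mp ht

theorem construct_sol (hqn : spectrum ℂ T = {0}) (hτ : 0 < τ)
    (hsum : Summable fun k : ℤ => ‖bvec T τ y k‖ ^ 2) :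
    ∃ G : Lp X 2 (volume.restrict (Set.Ioc (0:ℝ) τ)),
      HasSum (fun k => Viso hτ k ((sq' τ)⁻¹ • bvec T τ y k)) G ∧
      (∀ k, cf τ k ⇑G = bvec T τ y k) ∧ IsL2Sol T τ y ⇑G := by
  set w : ℤ → X := fun k => (sq' τ)⁻¹ • bvec T τ y k with hw
  have hwsum : Summable fun k => ‖w k‖ ^ 2 := by
    have : (fun k => ‖w k‖ ^ 2) = fun k => ‖(sq' τ)⁻¹‖ ^ 2 * ‖bvec T τ y k‖ ^ 2 := by
      funext k
      rw [hw]
      simp [norm_smul, mul_pow]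
    rw [this]
    exact hsum.mul_left _
  obtain ⟨G, hG, hGcf⟩ := hasSum_Viso hτ w hwsum
  have hcf : ∀ k, cf τ k ⇑G = bvec T τ y k := by
    intro k
    rw [hGcf k, hw, smul_smul, mul_inv_cancel₀ (sq'_ne_zero hτ), one_smul]
  refine ⟨G, hG, hcf, ?_⟩
  have hGL2 : MemLp (⇑G) 2 (volume.restrict (Set.Ioc (0:ℝ) τ)) := Lp.memLp G
  have hGi : Integrable (⇑G) (volume.restrict (Set.Ioc (0:ℝ) τ)) := integrable_of_L2 hGL2
  have hy' : (∫ s in Set.Ioc (0:ℝ) τ, G s) = y := by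
    rw [← cf_zero_eq, hcf 0, bvec_zero hqn]
  refine ⟨hGL2, ?_, ?_⟩
  · -- the integrated ODE
    set P : ℝ → X := fun t => ∫ s in (0:ℝ)..t, G s with hP
    have hPL2 : MemLp P 2 (volume.restrict (Set.Ioc (0:ℝ) τ)) := memL2_primitive hτ hGL2
    have hTG : MemLp (fun t => T (G t)) 2 (volume.restrict (Set.Ioc (0:ℝ) τ)) :=
      T.comp_memLp' hGL2
    set c : X := (τ:ℂ)⁻¹ • cf τ 0 (fun t => T (G t) - P t) with hc
    refine ⟨c, ?_⟩
    set D : ℝ → X := fun t => (T (G t) - P t) - c with hD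
    have hDL2 : MemLp D 2 (volume.restrict (Set.Ioc (0:ℝ) τ)) :=
      (hTG.sub hPL2).sub (memLp_const c)
    have hDcf : ∀ n : ℤ, cf τ n D = 0 := by
      intro n
      have h1 : cf τ n D = cf τ n (fun t => T (G t) - P t) - cf τ n (fun _ => c) :=
        cf_sub (integrable_of_L2 (hTG.sub hPL2)) (integrable_const c)
      rcases eq_or_ne n 0 with rfl | hn
      · rw [h1, cf_const hτ, if_pos rfl, hc, smul_smul,
          mul_inv_cancel₀ (Complex.ofReal_ne_zero.mpr hτ.ne'), one_smul, sub_self]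
      · rw [h1, cf_const hτ, if_neg hn, zero_smul, sub_zero,
          cf_sub (integrable_of_L2 hTG) (integrable_of_L2 hPL2)]
        have h2 : cf τ n (fun t => T (G t)) = T (bvec T τ y n) := by
          rw [cf_clm T hGi, hcf n]
        have h3 : cf τ n P = (freq τ n)⁻¹ • (bvec T τ y n - y) := by
          rw [cf, cf_primitive hτ hGL2 hn, hcf n, hy']
        rw [h2, h3, T_bvec hqn hτ hn, sub_self]
    have := vec_cancel hτ hDL2 hDcf
    filter_upwards [this] with t ht
    have h5 : T (G t) - P t = c := sub_eq_zero.mp ht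
    rw [← h5]
    abel
  · rw [intervalIntegral.integral_of_le hτ.le]
    exact hy'

theorem part3 (hqn : spectrum ℂ T = {0}) (hτ : 0 < τ) {x : ℝ → X}
    (hs : IsL2Sol T τ y x) :
    Filter.Tendsto
      (fun s : Finset ℤ => ∫ t in Set.Ioc (0:ℝ) τ,
        ‖x t - ∑ k ∈ s, τ⁻¹ • (Complex.exp (freq τ k * (t : ℂ)) •
          pinv (1 - freq τ k • T) y)‖ ^ 2)
      Filter.atTop (nhds 0) := by
  obtain ⟨G, hG, hGcf, hGsol⟩ := construct_sol hqn hτ (forward_summable hqn hτ hs)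
  have hxG : x =ᵐ[volume.restrict (Set.Ioc (0:ℝ) τ)] ⇑G := unique_sol hqn hτ hs hGsol
  set w : ℤ → X := fun k => (sq' τ)⁻¹ • bvec T τ y k with hw
  have hsummand : ∀ (t : ℝ) (k : ℤ),
      τ⁻¹ • (Complex.exp (freq τ k * (t:ℂ)) • bvec T τ y k)
        = efun τ k ((sq' τ)⁻¹ • w k) t := by
    intro t k
    show _ = Complex.exp (freq τ k * (t:ℂ)) • ((sq' τ)⁻¹ • w k)
    rw [hw]
    rw [smul_smul ((sq' τ)⁻¹) ((sq' τ)⁻¹), ← mul_inv, sq'_mul_self hτ]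
    rw [smul_comm]
    congr 1
    rw [← Complex.coe_smul, Complex.ofReal_inv]
  have hint : ∀ s : Finset ℤ,
      (∫ t in Set.Ioc (0:ℝ) τ,
        ‖x t - ∑ k ∈ s, τ⁻¹ • (Complex.exp (freq τ k * (t : ℂ)) •
          pinv (1 - freq τ k • T) y)‖ ^ 2)
      = ‖G - ∑ k ∈ s, Viso hτ k (w k)‖ ^ 2 := by
    intro s
    rw [norm_sq_eq_integral]
    refine integral_congr_ae ?_
    have h1 := Lp.coeFn_sub G (∑ k ∈ s, Viso hτ k (w k))
    have h2 := coeFn_finsetSum (τ := τ) s (fun k => Viso hτ k (w k))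
    have h3 : ∀ᵐ t ∂(volume.restrict (Set.Ioc (0:ℝ) τ)),
        ∀ k ∈ s, ⇑(Viso hτ k (w k)) t = efun τ k ((sq' τ)⁻¹ • w k) t :=
      (Filter.eventually_all_finset s).mpr fun k _ => coeFn_Viso hτ k (w k)
    filter_upwards [h1, h2, h3, hxG] with t ht1 ht2 ht3 ht4
    have hkey : x t - ∑ k ∈ s, τ⁻¹ • (Complex.exp (freq τ k * (t : ℂ)) •
          pinv (1 - freq τ k • T) y)
        = (G - ∑ k ∈ s, Viso hτ k (w k)) t := by
      show x t - ∑ k ∈ s, τ⁻¹ • (Complex.exp (freq τ k * (t : ℂ)) • bvec T τ y k) = _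
      rw [ht1]
      simp only [Pi.sub_apply]
      rw [ht2, ht4]
      congr 1
      refine Finset.sum_congr rfl fun k hk => ?_
      rw [hsummand t k, ht3 k hk]
    rw [hkey]
  have htend : Filter.Tendsto (fun s : Finset ℤ => ‖G - ∑ k ∈ s, Viso hτ k (w k)‖ ^ 2)
      Filter.atTop (nhds 0) := by
    have h2 := (tendsto_const_nhds (x := G) (f := Filter.atTop (α := Finset ℤ))).sub hG
    have h3 := (h2.norm).pow 2
    rw [sub_self, norm_zero, zero_pow (by norm_num : (2:ℕ) ≠ 0)] at h3
    exact h3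
  exact htend.congr (fun s => (hint s).symm)

end Main

end Stmt18Aux


/-- For a bounded quasi-nilpotent operator `T` on a complex Hilbert space `X`, `τ > 0` and
`y ∈ X`: there is an `L²`-solution of `(d/dt)(Tx) = x` on `[0,τ]` with `Tx(τ) - Tx(0) = y`
iff `∑_{k ∈ ℤ} ‖(I - (2πik/τ)T)⁻¹ y‖² < ∞`; in this case the solution is unique (a.e.) and
is given by the unconditionally `L²`-convergent Fourier series
`x(t) = (1/τ) ∑_{k ∈ ℤ} (I - (2πik/τ)T)⁻¹ y · e^{2πikt/τ}`. -/
theorem stmt18 {X : Type*} [NormedAddCommGroup X] [InnerProductSpace ℂ X] [CompleteSpace X]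
    (T : X →L[ℂ] X) (hqn : spectrum ℂ T = {0}) (τ : ℝ) (hτ : 0 < τ) (y : X) :
    ((∃ x : ℝ → X, IsL2Sol T τ y x) ↔
      Summable (fun k : ℤ => ‖pinv (1 - freq τ k • T) y‖ ^ 2)) ∧
    (∀ x x' : ℝ → X, IsL2Sol T τ y x → IsL2Sol T τ y x' →
      ∀ᵐ t ∂(volume.restrict (Set.Ioc (0:ℝ) τ)), x t = x' t) ∧
    (∀ x : ℝ → X, IsL2Sol T τ y x →
      Filter.Tendsto
        (fun s : Finset ℤ => ∫ t in Set.Ioc (0:ℝ) τ,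
          ‖x t - ∑ k ∈ s, τ⁻¹ • (Complex.exp (freq τ k * (t : ℂ)) •
            pinv (1 - freq τ k • T) y)‖ ^ 2)
        Filter.atTop (nhds 0)) := by
  refine ⟨⟨fun ⟨x, hx⟩ => Stmt18Aux.forward_summable hqn hτ hx, fun hsum => ?_⟩,
    fun x x' hx hx' => Stmt18Aux.unique_sol hqn hτ hx hx',
    fun x hx => Stmt18Aux.part3 hqn hτ hx⟩
  obtain ⟨G, _, _, hGsol⟩ := Stmt18Aux.construct_sol hqn hτ hsum
  exact ⟨⇑G, hGsol⟩
end

section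
/- Let X be a complex Banach space and let T be an injective bounded quasi-nilpotent linear operator on X, and let x_0 ∈ X. Then the initial value problem T x'(t) = x(t), x(0) = x_0 has a solution x given by a power series x(t) = ∑_{k≥0} x_k t^k with coefficients x_k ∈ X converging on some interval [0,r) with r > 0, if and only if for every n ∈ ℕ there exists (a necessarily unique) z_n ∈ X with T^n z_n = x_0 and limsup_{k→∞} (1/k) ‖z_k‖^{1/k} < ∞. In this case the coefficients are forced, namely x_k = z_k / k!, so the analytic solution is unique; moreover, if x_0 ≠ 0 then the radius of convergence r of any such power series solution satisfies r ≤ a/e, where a = liminf_{n→∞} n ‖T^n‖^{1/n}. In particular, if a = 0, the only analytic solution of T x' = x is the zero function. -/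
open Filter

/-- `x(t) = ∑_{k≥0} a_k t^k` is a power series solution of `T x' = x`, `x(0) = x₀`,
on `[0,r)`: the series converges absolutely for `0 ≤ t < r`, `a 0 = x₀`, the termwise
derivative series converges and `T x'(t) = x(t)` for all `t ∈ [0,r)`. -/
def IsPowerSeriesSol {X : Type*} [NormedAddCommGroup X] [NormedSpace ℂ X]
    (T : X →L[ℂ] X) (x₀ : X) (r : ℝ) (a : ℕ → X) : Prop :=
  a 0 = x₀ ∧
  (∀ t ∈ Set.Ico (0:ℝ) r, Summable (fun k : ℕ => ‖a k‖ * t ^ k)) ∧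
  (∀ t ∈ Set.Ico (0:ℝ) r,
    Summable (fun k : ℕ => ((k + 1 : ℝ) * t ^ k) • a (k + 1)) ∧
    T (∑' k : ℕ, ((k + 1 : ℝ) * t ^ k) • a (k + 1)) = ∑' k : ℕ, t ^ k • a k)


namespace Stmt19Aux
set_option linter.unusedSectionVars false


lemma fact_lb (n : ℕ) : ((n:ℝ)/Real.exp 1)^n ≤ n.factorial := by
  have h1 : ((n:ℝ))^n / n.factorial ≤ Real.exp n := by
    calc ((n:ℝ))^n / n.factorial ≤ ∑ i ∈ Finset.range (n+1), (n:ℝ)^i / i.factorial := by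
          exact Finset.single_le_sum (f := fun i => (n:ℝ)^i / i.factorial)
            (fun i _ => by positivity) (Finset.self_mem_range_succ n)
      _ ≤ Real.exp n := Real.sum_le_exp_of_nonneg (Nat.cast_nonneg n) _
  have he : Real.exp (n:ℝ) = Real.exp 1 ^ n := by
    rw [← Real.exp_nat_mul]; ring_nf
  have hfac : (0:ℝ) < n.factorial := by positivity
  have hexp : (0:ℝ) < Real.exp 1 ^ n := by positivity
  rw [div_pow, div_le_iff₀ hexp]
  rw [div_le_iff₀ hfac, he] at h1
  nlinarith

lemma e_le (k : ℕ) (hk : 1 ≤ k) : Real.exp 1 * (k:ℝ)^(k+1) ≤ ((k:ℝ)+1)^(k+1) := by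
  have hk0 : (0:ℝ) < k := by exact_mod_cast hk
  have h := Real.add_one_le_exp (-(1/((k:ℝ)+1)))
  have h1 : (k:ℝ)/((k:ℝ)+1) ≤ (Real.exp (1/((k:ℝ)+1)))⁻¹ := by
    rw [← Real.exp_neg]
    have heq : -(1/((k:ℝ)+1)) + 1 = (k:ℝ)/((k:ℝ)+1) := by field_simp; ring
    linarith [heq ▸ h]
  have hepos : (0:ℝ) < Real.exp (1/((k:ℝ)+1)) := Real.exp_pos _
  have h2 : Real.exp (1/((k:ℝ)+1)) * (k:ℝ) ≤ (k:ℝ)+1 := by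
    have h3 := mul_le_mul_of_nonneg_left h1 hepos.le
    rw [mul_inv_cancel₀ hepos.ne'] at h3
    calc Real.exp (1/((k:ℝ)+1)) * (k:ℝ)
        = (Real.exp (1/((k:ℝ)+1)) * ((k:ℝ)/((k:ℝ)+1))) * ((k:ℝ)+1) := by field_simp
      _ ≤ 1 * ((k:ℝ)+1) := by nlinarith
      _ = (k:ℝ)+1 := one_mul _
  have h3 : Real.exp 1 * (k:ℝ)^(k+1) = (Real.exp (1/((k:ℝ)+1)) * k)^(k+1) := by
    rw [mul_pow, ← Real.exp_nat_mul]
    congr 2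
    field_simp
    norm_cast
  rw [h3]
  exact pow_le_pow_left₀ (by positivity) h2 _

lemma fact_ub' (E : ℝ) (hep : 0 < E)
    (keyh : ∀ k : ℕ, 1 ≤ k → E * (k:ℝ)^(k+1) ≤ ((k:ℝ)+1)^(k+1))
    (n : ℕ) (hn : 1 ≤ n) : (n.factorial : ℝ) ≤ E * n * ((n:ℝ)/E)^n := by
  induction n with
  | zero => omega
  | succ k ih =>
    rcases Nat.eq_zero_or_pos k with h1 | h1
    · subst h1; norm_num [Nat.factorial]
      rw [mul_inv_cancel₀ hep.ne']
    · have hk : 1 ≤ k := h1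
      have ihk := ih hk
      have hkpos : (0:ℝ) < k := by exact_mod_cast hk
      have key := keyh k hk
      rw [Nat.factorial_succ]
      push_cast
      have hpe : (0:ℝ) < E ^ k := by positivity
      have lhs_eq : ((k:ℝ)+1) * (E * k * ((k:ℝ)/E)^k)
          = (((k:ℝ)+1) * (E * (k:ℝ)^(k+1))) / E ^ k := by
        rw [div_pow, pow_succ]; field_simp
      have rhs_eq : E * ((k:ℝ)+1) * (((k:ℝ)+1)/E)^(k+1)
          = (((k:ℝ)+1) * ((k:ℝ)+1)^(k+1)) / E ^ k := by
        rw [div_pow, pow_succ]; field_simp; ring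
      calc ((k:ℝ)+1) * (k.factorial : ℝ)
          ≤ ((k:ℝ)+1) * (E * k * ((k:ℝ)/E)^k) :=
            mul_le_mul_of_nonneg_left ihk (by positivity)
        _ = (((k:ℝ)+1) * (E * (k:ℝ)^(k+1))) / E ^ k := lhs_eq
        _ ≤ (((k:ℝ)+1) * ((k:ℝ)+1)^(k+1)) / E ^ k := by
            gcongr
        _ = E * ((k:ℝ)+1) * (((k:ℝ)+1)/E)^(k+1) := rhs_eq.symm

lemma fact_ub (n : ℕ) (hn : 1 ≤ n) : (n.factorial : ℝ) ≤ Real.exp 1 * n * ((n:ℝ)/Real.exp 1)^n :=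
  fact_ub' _ (Real.exp_pos 1) e_le n hn

variable {X : Type*} [NormedAddCommGroup X] [NormedSpace ℂ X] [CompleteSpace X]

lemma series_ident (d : ℕ → X) (r : ℝ) (hr : 0 < r)
    (hs : ∀ t ∈ Set.Ico (0:ℝ) r, Summable (fun k : ℕ => ‖d k‖ * t ^ k))
    (hz : ∀ t ∈ Set.Ico (0:ℝ) r, (∑' k : ℕ, t ^ k • d k) = 0) :
    ∀ n, d n = 0 := by
  intro n
  induction n using Nat.strong_induction_on with
  | _ n ih =>
  set t₀ : ℝ := r/2 with ht₀
  have ht₀pos : 0 < t₀ := by positivity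
  have ht₀mem : t₀ ∈ Set.Ico (0:ℝ) r := ⟨ht₀pos.le, by linarith⟩
  have hsum₀ : Summable (fun k : ℕ => ‖d k‖ * t₀ ^ k) := hs t₀ ht₀mem
  have htail : Summable (fun k : ℕ => ‖d (k + (n+1))‖ * t₀ ^ k) := by
    have h1 : Summable (fun k : ℕ => ‖d (k + (n+1))‖ * t₀ ^ (k + (n+1))) :=
      (summable_nat_add_iff (f := fun k => ‖d k‖ * t₀ ^ k) (n+1)).2 hsum₀
    apply (h1.mul_right ((t₀ ^ (n+1))⁻¹)).congr
    intro k
    rw [pow_add]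
    field_simp
    try ring
  set C : ℝ := ∑' k : ℕ, ‖d (k + (n+1))‖ * t₀ ^ k with hC
  have hCnn : 0 ≤ C := tsum_nonneg (fun k => by positivity)
  have key : ∀ t : ℝ, 0 < t → t ≤ t₀ → ‖d n‖ ≤ t * C := by
    intro t ht ht1
    have htmem : t ∈ Set.Ico (0:ℝ) r := ⟨ht.le, by linarith⟩
    have htn : (0:ℝ) < t ^ n := by positivity
    have hnorm : Summable (fun k : ℕ => ‖t ^ k • d k‖) := by
      apply (hs t htmem).congr
      intro k
      rw [norm_smul, norm_pow, Real.norm_eq_abs, abs_of_nonneg ht.le]; ring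
    have hsumv : Summable (fun k : ℕ => t ^ k • d k) := hnorm.of_norm
    have hsplit := Summable.sum_add_tsum_nat_add (f := fun k : ℕ => t ^ k • d k) n hsumv
    have hfin : (∑ i ∈ Finset.range n, t ^ i • d i) = 0 := by
      apply Finset.sum_eq_zero
      intro i hi
      rw [ih i (Finset.mem_range.mp hi), smul_zero]
    have htz : (∑' i : ℕ, t ^ (i + n) • d (i + n)) = 0 := by
      have := hz t htmem
      rw [hfin, zero_add] at hsplit
      rw [hsplit, this]
    have hshift : Summable (fun i : ℕ => t ^ (i + n) • d (i + n)) :=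
      (summable_nat_add_iff (f := fun k : ℕ => t ^ k • d k) n).2 hsumv
    have hinner : Summable (fun i : ℕ => t ^ i • d (i + n)) := by
      apply (hshift.const_smul ((t ^ n)⁻¹)).congr
      intro i
      rw [smul_smul, pow_add]
      field_simp
    have heq0 : t ^ n • (∑' i : ℕ, t ^ i • d (i + n)) = 0 := by
      rw [← Summable.tsum_const_smul _ hinner, ← htz]
      congr 1
      funext i
      rw [smul_smul, pow_add]
      ring_nf
    have hzero : (∑' i : ℕ, t ^ i • d (i + n)) = 0 := by
      rcases smul_eq_zero.mp heq0 with h | h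
      · exact absurd h htn.ne'
      · exact h
    have hsucc := Summable.tsum_eq_zero_add hinner
    rw [hzero, pow_zero, one_smul] at hsucc
    simp only [Nat.zero_add, zero_add] at hsucc
    have hdn : d n = -(∑' i : ℕ, t ^ (i+1) • d ((i+1) + n)) := by
      rw [eq_neg_iff_add_eq_zero]
      exact hsucc.symm
    have hns : Summable (fun i : ℕ => ‖t ^ (i+1) • d ((i+1) + n)‖) := by
      have h1 : Summable (fun i : ℕ => ‖d (i + (n+1))‖ * t ^ i) := by
        have h2 : Summable (fun k : ℕ => ‖d (k + (n+1))‖ * t ^ (k + (n+1))) :=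
          (summable_nat_add_iff (f := fun k => ‖d k‖ * t ^ k) (n+1)).2 ((hs t htmem))
        apply (h2.mul_right ((t ^ (n+1))⁻¹)).congr
        intro k
        rw [pow_add]
        field_simp
        try ring
      apply (h1.mul_left t).congr
      intro i
      rw [norm_smul, norm_pow, Real.norm_eq_abs, abs_of_nonneg ht.le]
      have : (i+1) + n = i + (n+1) := by omega
      rw [this, pow_succ]
      ring
    calc ‖d n‖ = ‖∑' i : ℕ, t ^ (i+1) • d ((i+1) + n)‖ := by rw [hdn, norm_neg]
      _ ≤ ∑' i : ℕ, ‖t ^ (i+1) • d ((i+1) + n)‖ := norm_tsum_le_tsum_norm hns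
      _ ≤ ∑' i : ℕ, t * (‖d (i + (n+1))‖ * t₀ ^ i) := by
          apply Summable.tsum_le_tsum _ hns (htail.mul_left t)
          intro i
          rw [norm_smul, norm_pow, Real.norm_eq_abs, abs_of_nonneg ht.le]
          have he : (i+1) + n = i + (n+1) := by omega
          rw [he, pow_succ]
          have h1 : t ^ i ≤ t₀ ^ i := pow_le_pow_left₀ ht.le ht1 i
          have h2 : (0:ℝ) ≤ ‖d (i + (n+1))‖ := norm_nonneg _
          nlinarith [mul_le_mul_of_nonneg_right h1 (mul_nonneg ht.le h2)]
      _ = t * C := by rw [tsum_mul_left]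
  by_contra hd
  have hdn : 0 < ‖d n‖ := norm_pos_iff.mpr hd
  set t : ℝ := min t₀ (‖d n‖ / (2 * (C + 1))) with htdef
  have htpos : 0 < t := lt_min ht₀pos (by positivity)
  have h1 := key t htpos (min_le_left _ _)
  have h2 : t ≤ ‖d n‖ / (2 * (C + 1)) := min_le_right _ _
  have h3 : t * C ≤ (‖d n‖ / (2 * (C + 1))) * (C+1) := by
    apply mul_le_mul h2 (by linarith) hCnn (by positivity)
  have h4 : (‖d n‖ / (2 * (C + 1))) * (C+1) = ‖d n‖ / 2 := by
    field_simp
  linarith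
variable {X : Type*} [NormedAddCommGroup X] [NormedSpace ℂ X] [CompleteSpace X]

lemma deriv_norm_summable (a : ℕ → X) (r : ℝ)
    (hs : ∀ t ∈ Set.Ico (0:ℝ) r, Summable (fun k : ℕ => ‖a k‖ * t ^ k)) :
    ∀ t ∈ Set.Ico (0:ℝ) r, Summable (fun k : ℕ => ((k:ℝ) + 1) * ‖a (k+1)‖ * t ^ k) := by
  intro t ⟨ht0, htr⟩
  set s : ℝ := (t + r) / 2 with hsdef
  have hts : t < s := by simp only [hsdef]; linarith
  have hsr : s < r := by simp only [hsdef]; linarith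
  have hspos : 0 < s := by linarith
  have hsum : Summable (fun k : ℕ => ‖a (k+1)‖ * s ^ (k+1)) :=
    (summable_nat_add_iff (f := fun k => ‖a k‖ * s ^ k) 1).2 (hs s ⟨hspos.le, hsr⟩)
  set q : ℝ := t / s with hq
  have hq0 : 0 ≤ q := by positivity
  have hq1 : q < 1 := by rw [hq, div_lt_one hspos]; exact hts
  have hgeo : Summable (fun k : ℕ => ((k:ℝ)+1) * q ^ k) := by
    have h1 : Summable (fun k : ℕ => (k:ℝ) * q ^ k) := by
      have := summable_pow_mul_geometric_of_norm_lt_one (R := ℝ) 1 (by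
        rwa [Real.norm_eq_abs, abs_of_nonneg hq0])
      apply this.congr; intro k; rw [pow_one]
    have h2 : Summable (fun k : ℕ => q ^ k) := summable_geometric_of_lt_one hq0 hq1
    apply (h1.add h2).congr; intro k; ring
  obtain ⟨D, hD⟩ := hgeo.tendsto_atTop_zero.bddAbove_range
  have hDnn : ∀ k : ℕ, ((k:ℝ)+1) * q ^ k ≤ D := fun k =>
    hD (Set.mem_range_self k)
  apply Summable.of_nonneg_of_le (fun k => by positivity)
    (f := fun k : ℕ => (D / s) * (‖a (k+1)‖ * s ^ (k+1)))
  · intro k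
    have hterm : ((k:ℝ)+1) * ‖a (k+1)‖ * t ^ k
        = (((k:ℝ)+1) * q ^ k) * (‖a (k+1)‖ * s ^ k) := by
      rw [hq, div_pow]
      field_simp
    rw [hterm]
    have h1 : (((k:ℝ)+1) * q ^ k) * (‖a (k+1)‖ * s ^ k) ≤ D * (‖a (k+1)‖ * s ^ k) :=
      mul_le_mul_of_nonneg_right (hDnn k) (by positivity)
    have h2 : D * (‖a (k+1)‖ * s ^ k) = (D / s) * (‖a (k+1)‖ * s ^ (k+1)) := by
      rw [pow_succ]
      field_simp
    linarith
  · exact hsum.mul_left _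

lemma forced (T : X →L[ℂ] X) (x₀ : X) (r : ℝ) (hr : 0 < r) (a : ℕ → X)
    (hsol : IsPowerSeriesSol T x₀ r a) :
    ∀ k : ℕ, ((k:ℝ) + 1) • T (a (k+1)) = a k := by
  obtain ⟨h0, hcoef, hode⟩ := hsol
  set d : ℕ → X := fun k => ((k:ℝ) + 1) • T (a (k+1)) - a k with hd
  have hder := deriv_norm_summable a r hcoef
  have key : ∀ n, d n = 0 := by
    apply series_ident d r hr
    · intro t ht
      apply Summable.of_nonneg_of_le
        (fun k => mul_nonneg (norm_nonneg _) (pow_nonneg ht.1 _))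
        (f := fun k : ℕ => ‖T‖ * (((k:ℝ)+1) * ‖a (k+1)‖ * t ^ k) + ‖a k‖ * t ^ k)
      · intro k
        have hb : ‖d k‖ ≤ ‖T‖ * (((k:ℝ)+1) * ‖a (k+1)‖) + ‖a k‖ := by
          simp only [hd]
          refine (norm_sub_le _ _).trans ?_
          gcongr
          rw [norm_smul, Real.norm_eq_abs, abs_of_nonneg (by positivity)]
          calc ((k:ℝ)+1) * ‖T (a (k+1))‖ ≤ ((k:ℝ)+1) * (‖T‖ * ‖a (k+1)‖) := by
                gcongr; exact T.le_opNorm _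
            _ = ‖T‖ * (((k:ℝ)+1) * ‖a (k+1)‖) := by ring
        have htk : (0:ℝ) ≤ t ^ k := pow_nonneg ht.1 k
        calc ‖d k‖ * t ^ k ≤ (‖T‖ * (((k:ℝ)+1) * ‖a (k+1)‖) + ‖a k‖) * t ^ k :=
              mul_le_mul_of_nonneg_right hb htk
          _ = ‖T‖ * (((k:ℝ)+1) * ‖a (k+1)‖ * t ^ k) + ‖a k‖ * t ^ k := by ring
      · exact ((hder t ht).mul_left _).add (hcoef t ht)
    · intro t ht
      obtain ⟨hds, heq⟩ := hode t ht
      have hs1 : Summable (fun k : ℕ => T (((((k:ℕ):ℝ) + 1) * t ^ k) • a (k + 1))) :=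
        hds.map (T : X →L[ℂ] X) T.continuous |>.congr (fun k => rfl)
      have hs2 : Summable (fun k : ℕ => t ^ k • a k) := by
        apply Summable.of_norm
        apply (hcoef t ht).congr
        intro k
        rw [norm_smul, norm_pow, Real.norm_eq_abs, abs_of_nonneg ht.1]
        ring
      have hmap : T (∑' k : ℕ, ((((k:ℕ):ℝ) + 1) * t ^ k) • a (k + 1))
          = ∑' k : ℕ, T (((((k:ℕ):ℝ) + 1) * t ^ k) • a (k + 1)) :=
        ContinuousLinearMap.map_tsum _ hds
      have hterm : ∀ k : ℕ, t ^ k • d k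
          = T (((((k:ℕ):ℝ) + 1) * t ^ k) • a (k + 1)) - t ^ k • a k := by
        intro k
        simp only [hd, smul_sub]
        congr 1
        rw [smul_smul, ContinuousLinearMap.map_smul_of_tower, mul_comm]
      calc (∑' k : ℕ, t ^ k • d k)
          = ∑' k : ℕ, (T (((((k:ℕ):ℝ) + 1) * t ^ k) • a (k + 1)) - t ^ k • a k) := by
            exact tsum_congr hterm
        _ = (∑' k : ℕ, T (((((k:ℕ):ℝ) + 1) * t ^ k) • a (k + 1))) - ∑' k : ℕ, t ^ k • a k :=
            Summable.tsum_sub hs1 hs2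
        _ = 0 := by rw [← hmap, heq, sub_self]
  intro k
  have := key k
  simp only [hd] at this
  linear_combination (norm := abel) this

lemma pow_inj (T : X →L[ℂ] X) (hinj : Function.Injective T) (k : ℕ) :
    Function.Injective (T ^ k) := by
  induction k with
  | zero => simp [ContinuousLinearMap.one_apply, Function.Injective]
  | succ n ih =>
    intro x y hxy
    rw [pow_succ] at hxy
    simp only [ContinuousLinearMap.mul_apply] at hxy
    exact hinj (ih hxy)

lemma part2 (T : X →L[ℂ] X) (x₀ : X) (r : ℝ) (hr : 0 < r) (a : ℕ → X)
    (hsol : IsPowerSeriesSol T x₀ r a) :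
    ∀ k : ℕ, (k.factorial : ℝ) • (T ^ k) (a k) = x₀ := by
  have hf := forced T x₀ r hr a hsol
  intro k
  induction k with
  | zero => simpa using hsol.1
  | succ n ih =>
    have h1 : (T ^ (n+1)) (a (n+1)) = (T ^ n) (T (a (n+1))) := by
      rw [pow_succ]
      simp [ContinuousLinearMap.mul_apply]
    rw [h1, Nat.factorial_succ]
    push_cast
    rw [mul_comm, mul_smul, ← ih]
    congr 1
    rw [← FunLike.coe_pow_eq_iterate]
    rw [← ContinuousLinearMap.map_smul_of_tower]
    congr 1
    exact hf n

lemma part1_fwd (T : X →L[ℂ] X) (x₀ : X) (r : ℝ) (hr : 0 < r) (a : ℕ → X)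
    (hsol : IsPowerSeriesSol T x₀ r a) :
    ∃ z : ℕ → X, (∀ n : ℕ, (T ^ n) (z n) = x₀) ∧
      ∃ M : ℝ, ∀ᶠ k : ℕ in atTop, ‖z k‖ ^ ((1:ℝ) / k) / k ≤ M := by
  refine ⟨fun k => (k.factorial : ℝ) • a k, ?_, ?_⟩
  · intro n
    rw [ContinuousLinearMap.map_smul_of_tower]
    exact part2 T x₀ r hr a hsol n
  · obtain ⟨t₀, ht₀pos, ht₀lt⟩ : ∃ t₀ : ℝ, 0 < t₀ ∧ t₀ < r := ⟨r/2, by positivity, by linarith⟩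
    have hmem : t₀ ∈ Set.Ico (0:ℝ) r := ⟨ht₀pos.le, ht₀lt⟩
    obtain ⟨C, hC⟩ := ((hsol.2.1 t₀ hmem).tendsto_atTop_zero).bddAbove_range
    have hCb : ∀ k : ℕ, ‖a k‖ * t₀ ^ k ≤ C := fun k => hC (Set.mem_range_self k)
    have hC0 : 0 ≤ C := le_trans (by positivity) (hCb 0)
    set M : ℝ := (C + 1) / t₀ with hM
    have hMpos : 0 < M := by positivity
    refine ⟨M, ?_⟩
    filter_upwards [eventually_ge_atTop 1] with k hk
    have hkpos : (0:ℝ) < k := by exact_mod_cast hk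
    have hbound : ‖(k.factorial : ℝ) • a k‖ ≤ ((k:ℝ) * M) ^ k := by
      rw [norm_smul, Real.norm_eq_abs, abs_of_nonneg (by positivity)]
      have h1 : (k.factorial : ℝ) ≤ (k:ℝ) ^ k := by
        exact_mod_cast Nat.factorial_le_pow k
      have h2 : ‖a k‖ ≤ C / t₀ ^ k := by
        rw [le_div_iff₀ (by positivity)]
        exact hCb k
      calc (k.factorial : ℝ) * ‖a k‖ ≤ (k:ℝ)^k * (C / t₀ ^ k) := by
            apply mul_le_mul h1 h2 (norm_nonneg _) (by positivity)
        _ ≤ ((k:ℝ) * M) ^ k := by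
            rw [mul_pow, hM, div_pow]
            gcongr
            calc C ≤ C + 1 := by linarith
              _ ≤ (C+1)^k := le_self_pow₀ (by linarith) (by omega)
    have hrpow : ‖(k.factorial : ℝ) • a k‖ ^ ((1:ℝ)/k) ≤ (k:ℝ) * M := by
      have h4 := Real.rpow_le_rpow (norm_nonneg _) hbound (by positivity : (0:ℝ) ≤ (1:ℝ)/k)
      rw [one_div] at h4
      rw [Real.pow_rpow_inv_natCast (by positivity) (by omega : k ≠ 0)] at h4
      rw [one_div]
      exact h4
    rw [div_le_iff₀ hkpos]
    calc ‖(k.factorial : ℝ) • a k‖ ^ ((1:ℝ)/k) ≤ (k:ℝ) * M := hrpow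
      _ = M * k := by ring

lemma part1_bwd (T : X →L[ℂ] X) (hinj : Function.Injective T) (x₀ : X)
    (z : ℕ → X) (hz : ∀ n : ℕ, (T ^ n) (z n) = x₀)
    (M : ℝ) (hM : ∀ᶠ k : ℕ in atTop, ‖z k‖ ^ ((1:ℝ) / k) / k ≤ M) :
    ∃ r : ℝ, 0 < r ∧ ∃ a : ℕ → X, IsPowerSeriesSol T x₀ r a := by
  set E : ℝ := Real.exp 1 with hE
  have hEpos : 0 < E := Real.exp_pos 1
  set M' : ℝ := max M 1 with hM'
  have hM'1 : 1 ≤ M' := le_max_right _ _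
  have hM'pos : 0 < M' := lt_of_lt_of_le one_pos hM'1
  obtain ⟨N, hN⟩ := hM.exists_forall_of_atTop
  -- growth bound on z
  have hzb : ∀ k : ℕ, max N 1 ≤ k → ‖z k‖ ≤ (M' * k) ^ k := by
    intro k hk
    have hk1 : 1 ≤ k := le_trans (le_max_right _ _) hk
    have hkN : N ≤ k := le_trans (le_max_left _ _) hk
    have hkpos : (0:ℝ) < k := by exact_mod_cast hk1
    have h1 : ‖z k‖ ^ ((1:ℝ)/k) ≤ M' * k := by
      have := hN k hkN
      rw [div_le_iff₀ hkpos] at this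
      calc ‖z k‖ ^ ((1:ℝ)/k) ≤ M * k := this
        _ ≤ M' * k := by apply mul_le_mul_of_nonneg_right (le_max_left _ _) hkpos.le
    have h2 := pow_le_pow_left₀ (Real.rpow_nonneg (norm_nonneg _) _) h1 k
    rwa [one_div, Real.rpow_inv_natCast_pow (norm_nonneg _) (by omega)] at h2
  have hTz : ∀ k : ℕ, T (z (k+1)) = z k := by
    intro k
    apply pow_inj T hinj k
    have h1 : (T ^ k) (T (z (k+1))) = (T ^ (k+1)) (z (k+1)) := by
      rw [pow_succ]; simp [ContinuousLinearMap.mul_apply]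
    rw [h1, hz, hz]
  set a : ℕ → X := fun k => ((k.factorial : ℝ))⁻¹ • z k with ha
  set r : ℝ := 1 / (M' * E + 1) with hrdef
  have hrpos : 0 < r := by positivity
  have hcoef : ∀ t ∈ Set.Ico (0:ℝ) r, Summable (fun k : ℕ => ‖a k‖ * t ^ k) := by
    intro t ⟨ht0, htr⟩
    set K : ℕ := max N 1 with hK
    set ρ : ℝ := M' * E * t with hρ
    have hρ0 : 0 ≤ ρ := by positivity
    have hρ1 : ρ < 1 := by
      have : t < 1 / (M' * E + 1) := htr
      rw [lt_div_iff₀ (by positivity)] at this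
      nlinarith [mul_pos hM'pos hEpos]
    have hterm : ∀ k : ℕ, K ≤ k → ‖a k‖ * t ^ k ≤ ρ ^ k := by
      intro k hk
      have hk1 : 1 ≤ k := le_trans (le_max_right _ _) hk
      have hkpos : (0:ℝ) < k := by exact_mod_cast hk1
      have hfl := fact_lb k
      have hflpos : (0:ℝ) < ((k:ℝ)/E)^k := by positivity
      have hfac : (0:ℝ) < (k.factorial : ℝ) := by positivity
      have h1 : ‖a k‖ = ‖z k‖ / (k.factorial : ℝ) := by
        simp only [ha]
        rw [norm_smul, Real.norm_eq_abs, abs_of_nonneg (by positivity)]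
        rw [div_eq_inv_mul]
      rw [h1]
      have h2 : ‖z k‖ / (k.factorial : ℝ) ≤ (M' * k)^k / ((k:ℝ)/E)^k := by
        apply div_le_div₀ (by positivity) (hzb k hk) hflpos hfl
      have h3 : (M' * k)^k / ((k:ℝ)/E)^k = (M' * E)^k := by
        rw [← div_pow]
        congr 1
        field_simp
      calc ‖z k‖ / (k.factorial : ℝ) * t ^ k ≤ (M' * E)^k * t^k := by
            apply mul_le_mul_of_nonneg_right _ (pow_nonneg ht0 k)
            rw [← h3]; exact h2
        _ = ρ ^ k := by rw [hρ]; ring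
    apply (summable_nat_add_iff (f := fun k => ‖a k‖ * t ^ k) K).1
    apply Summable.of_nonneg_of_le (fun k => by positivity)
      (f := fun k : ℕ => ρ ^ k)
    · intro k
      calc ‖a (k+K)‖ * t ^ (k+K) ≤ ρ ^ (k+K) := hterm (k+K) (by omega)
        _ ≤ ρ ^ k := pow_le_pow_of_le_one hρ0 hρ1.le (by omega)
    · exact summable_geometric_of_lt_one hρ0 hρ1
  refine ⟨r, hrpos, a, ?_, hcoef, ?_⟩
  · have h0 := hz 0
    simp only [pow_zero, ContinuousLinearMap.one_apply] at h0
    simp [ha, h0]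
  · intro t htmem
    have hder := deriv_norm_summable a r hcoef t htmem
    have ht0 : (0:ℝ) ≤ t := htmem.1
    have hsumd : Summable (fun k : ℕ => ((k + 1 : ℝ) * t ^ k) • a (k + 1)) := by
      apply Summable.of_norm
      apply hder.congr
      intro k
      have h := norm_smul ((k + 1 : ℝ) * t ^ k) (a (k + 1))
      rw [h, Real.norm_eq_abs, abs_of_nonneg (by positivity : (0:ℝ) ≤ ((k:ℝ)+1) * t^k)]
      ring
    refine ⟨hsumd, ?_⟩
    rw [ContinuousLinearMap.map_tsum _ hsumd]
    apply tsum_congr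
    intro k
    rw [ContinuousLinearMap.map_smul_of_tower]
    have hTa : T (a (k+1)) = (((k+1).factorial : ℝ))⁻¹ • z k := by
      simp only [ha]
      rw [ContinuousLinearMap.map_smul_of_tower, hTz k]
    rw [hTa]
    simp only [ha]
    rw [smul_smul, smul_smul]
    congr 1
    rw [Nat.factorial_succ]
    have hfk : ((k.factorial : ℝ)) ≠ 0 := by positivity
    push_cast
    field_simp

lemma nat_rpow_inv_tendsto : Tendsto (fun k : ℕ => ((k:ℝ)) ^ ((1:ℝ)/(k:ℝ))) atTop (nhds 1) :=
  tendsto_rpow_div.comp tendsto_natCast_atTop_atTop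

lemma const_rpow_inv_tendsto (c : ℝ) (hc : 0 < c) :
    Tendsto (fun k : ℕ => c ^ ((1:ℝ)/(k:ℝ))) atTop (nhds 1) := by
  have h1 : Tendsto (fun k : ℕ => (1:ℝ)/(k:ℝ)) atTop (nhds 0) := by
    apply Tendsto.comp tendsto_one_div_atTop_nhds_zero_nat (by exact tendsto_id) |>.congr
    intro k; rfl
  have h2 : Tendsto (fun x : ℝ => c ^ x) (nhds 0) (nhds (c ^ (0:ℝ))) :=
    (Real.continuousAt_const_rpow hc.ne').tendsto
  have := h2.comp h1
  simpa [Real.rpow_zero, Function.comp_def] using this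

lemma part3 (T : X →L[ℂ] X) (x₀ : X) (hx₀ : x₀ ≠ 0) (r : ℝ) (hr : 0 < r) (a : ℕ → X)
    (hsol : IsPowerSeriesSol T x₀ r a) :
    ENNReal.ofReal (r * Real.exp 1) ≤
      Filter.liminf (fun n : ℕ => ENNReal.ofReal ((n : ℝ) * ‖T ^ n‖ ^ ((1:ℝ) / n))) atTop := by
  obtain ⟨E, hEpos, hEdef⟩ : ∃ E : ℝ, 0 < E ∧ E = Real.exp 1 :=
    ⟨Real.exp 1, Real.exp_pos 1, rfl⟩
  rw [← hEdef]
  apply le_of_forall_lt_imp_le_of_dense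
  intro b hb
  have hbtop : b ≠ ⊤ := by
    intro h
    rw [h] at hb
    exact (not_top_lt hb).elim
  have hbr : b.toReal < r * E := by
    rw [← ENNReal.lt_ofReal_iff_toReal_lt hbtop]
    exact hb
  have hb0 : 0 ≤ b.toReal := ENNReal.toReal_nonneg
  -- choose t
  obtain ⟨t, htpos, ht2, hbt⟩ : ∃ t : ℝ, 0 < t ∧ t < r ∧ b.toReal < t * E := by
    refine ⟨(b.toReal / E + r) / 2, ?_, ?_, ?_⟩
    · have : 0 ≤ b.toReal / E := by positivity
      linarith
    · have : b.toReal / E < r := by rw [div_lt_iff₀ hEpos]; nlinarith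
      linarith
    · have h1 : b.toReal / E < (b.toReal / E + r) / 2 := by
        have : b.toReal / E < r := by rw [div_lt_iff₀ hEpos]; nlinarith
        linarith
      rw [div_lt_iff₀ hEpos] at h1
      linarith
  -- bound from coefficients
  obtain ⟨C, hC⟩ := ((hsol.2.1 t ⟨htpos.le, ht2⟩).tendsto_atTop_zero).bddAbove_range
  have hCb : ∀ k : ℕ, ‖a k‖ * t ^ k ≤ C := fun k => hC (Set.mem_range_self k)
  have hC0 : 0 ≤ C := le_trans (by positivity) (hCb 0)
  obtain ⟨C', hC'pos, hCb', hCle⟩ : ∃ C' : ℝ, 0 < C' ∧ (∀ k : ℕ, ‖a k‖ * t ^ k ≤ C') ∧ C ≤ C' :=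
    ⟨C + 1, by positivity, fun k => by linarith [hCb k], by linarith⟩
  have hp2 := part2 T x₀ r hr a hsol
  have hx₀pos : 0 < ‖x₀‖ := norm_pos_iff.mpr hx₀
  obtain ⟨c, hcpos, hc⟩ : ∃ c : ℝ, 0 < c ∧ c = ‖x₀‖ / (C' * E) :=
    ⟨‖x₀‖ / (C' * E), by positivity, rfl⟩
  -- key bound for k ≥ 1
  have hkey : ∀ k : ℕ, 1 ≤ k → t * E * ((c / k) ^ ((1:ℝ)/(k:ℝ))) ≤ (k:ℝ) * ‖T ^ k‖ ^ ((1:ℝ)/(k:ℝ)) := by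
    intro k hk
    have hkpos : (0:ℝ) < k := by exact_mod_cast hk
    have hTk : (c / k) * (t * E / k) ^ k ≤ ‖T ^ k‖ := by
      have h1 : ‖x₀‖ = ‖(k.factorial : ℝ) • (T ^ k) (a k)‖ := by rw [hp2 k]
      have h2 : ‖x₀‖ ≤ (k.factorial : ℝ) * (‖T ^ k‖ * ‖a k‖) := by
        rw [h1, norm_smul, Real.norm_eq_abs, abs_of_nonneg (by positivity)]
        gcongr
        exact (T ^ k).le_opNorm _
      have h3 : ‖x₀‖ * t ^ k ≤ (k.factorial : ℝ) * ‖T ^ k‖ * C' := by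
        calc ‖x₀‖ * t ^ k ≤ ((k.factorial : ℝ) * (‖T ^ k‖ * ‖a k‖)) * t ^ k := by
              apply mul_le_mul_of_nonneg_right h2 (by positivity)
          _ = (k.factorial : ℝ) * ‖T ^ k‖ * (‖a k‖ * t ^ k) := by ring
          _ ≤ (k.factorial : ℝ) * ‖T ^ k‖ * C' := by
              apply mul_le_mul_of_nonneg_left _ (by positivity)
              exact hCb' k
      have hfub := fact_ub k hk
      rw [← hEdef] at hfub
      have hfac : (0:ℝ) < (k.factorial : ℝ) := by positivity
      have h4 : ‖x₀‖ * t ^ k ≤ (E * k * ((k:ℝ)/E)^k) * ‖T ^ k‖ * C' := by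
        calc ‖x₀‖ * t ^ k ≤ (k.factorial : ℝ) * ‖T ^ k‖ * C' := h3
          _ ≤ (E * k * ((k:ℝ)/E)^k) * ‖T ^ k‖ * C' := by
              apply mul_le_mul_of_nonneg_right _ hC'pos.le
              apply mul_le_mul_of_nonneg_right hfub (norm_nonneg _)
      -- rearrange
      have h5 : (c / k) * (t * E / k) ^ k = ‖x₀‖ * t ^ k / ((E * k * ((k:ℝ)/E)^k) * C') := by
        rw [hc]
        rw [div_pow, div_pow, mul_pow]
        field_simp
      rw [h5, div_le_iff₀ (by positivity)]
      nlinarith [norm_nonneg (T ^ k), pow_pos (div_pos hkpos hEpos) k]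
    -- take k-th roots
    have h6 : ((c / k) * (t * E / k) ^ k) ^ ((1:ℝ)/(k:ℝ)) ≤ ‖T ^ k‖ ^ ((1:ℝ)/(k:ℝ)) :=
      Real.rpow_le_rpow (by positivity) hTk (by positivity)
    have h7 : ((c / k) * (t * E / k) ^ k) ^ ((1:ℝ)/(k:ℝ))
        = (c / k) ^ ((1:ℝ)/(k:ℝ)) * (t * E / k) := by
      rw [Real.mul_rpow (by positivity) (by positivity), one_div,
        Real.pow_rpow_inv_natCast (by positivity) (by omega)]
    rw [h7] at h6
    calc t * E * ((c / k) ^ ((1:ℝ)/(k:ℝ)))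
        = (k:ℝ) * ((c / k) ^ ((1:ℝ)/(k:ℝ)) * (t * E / k)) := by field_simp
      _ ≤ (k:ℝ) * ‖T ^ k‖ ^ ((1:ℝ)/(k:ℝ)) := by
          apply mul_le_mul_of_nonneg_left h6 hkpos.le
  -- limit argument
  have hu : Tendsto (fun k : ℕ => t * E * ((c / k) ^ ((1:ℝ)/(k:ℝ)))) atTop (nhds (t * E)) := by
    have h1 : Tendsto (fun k : ℕ => (c / k) ^ ((1:ℝ)/(k:ℝ))) atTop (nhds 1) := by
      have hc1 : Tendsto (fun k : ℕ => c ^ ((1:ℝ)/(k:ℝ))) atTop (nhds 1) :=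
        const_rpow_inv_tendsto c hcpos
      have hk1 : Tendsto (fun k : ℕ => ((k:ℝ)) ^ ((1:ℝ)/(k:ℝ))) atTop (nhds 1) :=
        nat_rpow_inv_tendsto
      have := hc1.div hk1 one_ne_zero
      rw [div_one] at this
      apply this.congr'
      filter_upwards [eventually_ge_atTop 1] with k hk
      have hkpos : (0:ℝ) < k := by exact_mod_cast hk
      exact (Real.div_rpow hcpos.le hkpos.le _).symm
    have := h1.const_mul (t * E)
    simpa using this
  have hev : ∀ᶠ k : ℕ in atTop, b.toReal ≤ t * E * ((c / k) ^ ((1:ℝ)/(k:ℝ))) :=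
    hu.eventually_const_le hbt
  have hev2 : ∀ᶠ k : ℕ in atTop,
      b ≤ ENNReal.ofReal ((k:ℝ) * ‖T ^ k‖ ^ ((1:ℝ)/(k:ℝ))) := by
    filter_upwards [hev, eventually_ge_atTop 1] with k h1 hk
    have h2 := le_trans h1 (hkey k hk)
    calc b = ENNReal.ofReal b.toReal := (ENNReal.ofReal_toReal hbtop).symm
      _ ≤ ENNReal.ofReal ((k:ℝ) * ‖T ^ k‖ ^ ((1:ℝ)/(k:ℝ))) := ENNReal.ofReal_le_ofReal h2
  exact Filter.le_liminf_of_le (by isBoundedDefault) hev2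

end Stmt19Aux

/-- Let `T` be an injective bounded quasi-nilpotent operator on a complex Banach space and
`x₀ ∈ X`. The IVP `Tx' = x`, `x(0) = x₀` has a power series solution on some `[0,r)`, `r > 0`,
iff `x₀ ∈ ⋂ₙ ran Tⁿ` (with unique preimages `zₙ = T⁻ⁿx₀`) and
`limsup_k (1/k)‖z_k‖^{1/k} < ∞`. The coefficients of any such solution are forced
(`a_k = z_k/k!`), so the analytic solution is unique; if `x₀ ≠ 0`, the radius `r` of any
power series solution satisfies `r ≤ a/e` with `a = liminf_n n‖Tⁿ‖^{1/n}`; in particular,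
if `a = 0`, the only power series solution of `Tx' = x` is the zero function. -/
theorem stmt19 {X : Type*} [NormedAddCommGroup X] [NormedSpace ℂ X] [CompleteSpace X]
    (T : X →L[ℂ] X) (hinj : Function.Injective T) (hqn : spectrum ℂ T = {0}) (x₀ : X) :
    ((∃ r : ℝ, 0 < r ∧ ∃ a : ℕ → X, IsPowerSeriesSol T x₀ r a) ↔
      (∃ z : ℕ → X, (∀ n : ℕ, (T ^ n) (z n) = x₀) ∧
        ∃ M : ℝ, ∀ᶠ k : ℕ in atTop, ‖z k‖ ^ ((1:ℝ) / k) / k ≤ M)) ∧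
    (∀ r : ℝ, 0 < r → ∀ a : ℕ → X, IsPowerSeriesSol T x₀ r a →
      ∀ k : ℕ, (k.factorial : ℝ) • (T ^ k) (a k) = x₀) ∧
    (x₀ ≠ 0 → ∀ r : ℝ, 0 < r → ∀ a : ℕ → X, IsPowerSeriesSol T x₀ r a →
      ENNReal.ofReal (r * Real.exp 1) ≤
        Filter.liminf (fun n : ℕ => ENNReal.ofReal ((n : ℝ) * ‖T ^ n‖ ^ ((1:ℝ) / n))) atTop) ∧
    (Filter.liminf (fun n : ℕ => ENNReal.ofReal ((n : ℝ) * ‖T ^ n‖ ^ ((1:ℝ) / n))) atTop = 0 →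
      ∀ r : ℝ, 0 < r → ∀ a : ℕ → X, IsPowerSeriesSol T x₀ r a → ∀ k : ℕ, a k = 0) := by
  refine ⟨⟨?_, ?_⟩, ?_, ?_, ?_⟩
  · rintro ⟨r, hr, a, hsol⟩
    exact Stmt19Aux.part1_fwd T x₀ r hr a hsol
  · rintro ⟨z, hz, M, hM⟩
    exact Stmt19Aux.part1_bwd T hinj x₀ z hz M hM
  · intro r hr a hsol k
    exact Stmt19Aux.part2 T x₀ r hr a hsol k
  · intro hx₀ r hr a hsol
    exact Stmt19Aux.part3 T x₀ hx₀ r hr a hsol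
  · intro hlim r hr a hsol k
    have hx₀ : x₀ = 0 := by
      by_contra hx
      have h := Stmt19Aux.part3 T x₀ hx r hr a hsol
      rw [hlim] at h
      have hpos : (0:ENNReal) < ENNReal.ofReal (r * Real.exp 1) :=
        ENNReal.ofReal_pos.mpr (by positivity)
      exact absurd (le_antisymm h zero_le) hpos.ne'
    have h2 := Stmt19Aux.part2 T x₀ r hr a hsol k
    rw [hx₀] at h2
    have hfac : ((k.factorial : ℝ)) ≠ 0 := by positivity
    have h3 : (T ^ k) (a k) = 0 := by
      rcases smul_eq_zero.mp h2 with h | h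
      · exact absurd h hfac
      · exact h
    apply Stmt19Aux.pow_inj T hinj k
    rw [h3, map_zero]
end
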